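/- arXiv:1001.5397 — 12 statements merged into one kernel-verified Lean document; each statement's English description precedes it below -/
import Mathlib

section
/- rad(v1, v2) = rad(I) ∩ rad(x1^{a1}, x2^{b2}), where I = (v1, v2, D) is the Herzog–Northcott ideal. -/
open Ideal

/-- `rad(v1, v2) = rad(I) ∩ rad(x1^{a1}, x2^{b2})` for the Herzog–Northcott ideal
`I = (v1, v2, D)`. -/
theorem stmt_1 {A : Type*} [CommRing A] [IsNoetherianRing A] (x1 x2 x3 : A)
    (a1 a2 a3 b1 b2 b3 c1 c2 c3 : ℕ)
    (ha1 : 0 < a1) (ha2 : 0 < a2) (ha3 : 0 < a3)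
    (hb1 : 0 < b1) (hb2 : 0 < b2) (hb3 : 0 < b3)
    (hc1 : c1 = a1 + b1) (hc2 : c2 = a2 + b2) (hc3 : c3 = a3 + b3)
    (v1 v2 D : A)
    (hv1 : v1 = x1 ^ c1 - x2 ^ b2 * x3 ^ a3)
    (hv2 : v2 = x2 ^ c2 - x1 ^ a1 * x3 ^ b3)
    (hD : D = x3 ^ c3 - x1 ^ b1 * x2 ^ a2) :
    (Ideal.span {v1, v2}).radical =
      (Ideal.span {v1, v2, D}).radical ⊓
        (Ideal.span {x1 ^ a1, x2 ^ b2}).radical := by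
  subst hc1 hc2 hc3 hv1 hv2 hD
  refine le_antisymm (le_inf ?_ ?_) ?_
  · exact Ideal.radical_mono (Ideal.span_mono (by intro y hy; simp at hy; rcases hy with h | h <;>
      simp [h]))
  · refine Ideal.radical_mono (Ideal.span_le.2 ?_)
    intro y hy
    rcases hy with h | h
    · subst h
      exact Ideal.mem_span_pair.2 ⟨x1 ^ b1, -(x3 ^ a3), by ring⟩
    · simp only [Set.mem_singleton_iff] at h
      subst h
      exact Ideal.mem_span_pair.2 ⟨-(x3 ^ b3), x2 ^ a2, by ring⟩
  · rintro z ⟨hz1, hz2⟩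
    obtain ⟨n, hn⟩ := hz1
    obtain ⟨m, hm⟩ := hz2
    obtain ⟨p, q, hpq⟩ := Ideal.mem_span_pair.1 hm
    rw [show ({(x1 ^ (a1+b1) - x2 ^ b2 * x3 ^ a3), (x2 ^ (a2+b2) - x1 ^ a1 * x3 ^ b3),
        (x3 ^ (a3+b3) - x1 ^ b1 * x2 ^ a2)} : Set A) =
        insert (x1 ^ (a1+b1) - x2 ^ b2 * x3 ^ a3)
          (insert (x2 ^ (a2+b2) - x1 ^ a1 * x3 ^ b3)
            {(x3 ^ (a3+b3) - x1 ^ b1 * x2 ^ a2)}) from rfl] at hn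
    obtain ⟨r1, w1, hw1, he1⟩ := Ideal.mem_span_insert.1 hn
    obtain ⟨r2, w2, hw2, he2⟩ := Ideal.mem_span_insert.1 hw1
    obtain ⟨r3, he3⟩ := Ideal.mem_span_singleton'.1 hw2
    refine ⟨n + m, Ideal.mem_span_pair.2
      ⟨r1 * (p * x1 ^ a1 + q * x2 ^ b2) - r3 * p * x2 ^ a2 - r3 * q * x3 ^ b3,
       r2 * (p * x1 ^ a1 + q * x2 ^ b2) - r3 * p * x3 ^ a3 - r3 * q * x1 ^ b1, ?_⟩⟩
    rw [pow_add z n m, he1, he2, ← he3, ← hpq]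
    ring
end

section
/- If x1, x2, x3 is a regular sequence in A and grade(v1, v2) = 2, then each of x1, x2, x3 is a non-zerodivisor modulo the Herzog–Northcott ideal I = (v1, v2, D). -/
/-- The height of an ideal: the infimum of the heights (in the prime spectrum)
of the primes containing it. -/
noncomputable def idealHeight {A : Type*} [CommRing A] (J : Ideal A) : ℕ∞ :=
  ⨅ p : {p : PrimeSpectrum A // J ≤ p.asIdeal}, Order.height p.1

/-- The grade of an ideal: the supremum of the lengths of regular sequences
contained in it. -/
noncomputable def idealGrade {A : Type*} [CommRing A] (J : Ideal A) : ℕ∞ :=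
  sSup {n : ℕ∞ | ∃ rs : List A, (∀ r ∈ rs, r ∈ J) ∧
    RingTheory.Sequence.IsRegular A rs ∧ (rs.length : ℕ∞) = n}

/-!
Write `I = (v₁, v₂, D)`. The generators satisfy the two Hilbert–Burch syzygies
`x₂^a₂ v₁ + x₃^a₃ v₂ + x₁^a₁ D = 0` and `x₃^b₃ v₁ + x₁^b₁ v₂ + x₂^b₂ D = 0`, and `x₁, x₂^k, x₃^m`
is again a regular sequence. For `x₁ y = s v₁ + t v₂ + u D`, reducing modulo `(x₁, x₂^b₂)` gives
`u ∈ (x₁, x₂^b₂)`, and the second syzygy absorbs the `x₂^b₂`-part of `u`, so it suffices to show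
`(v₁, v₂) : x₁ ⊆ I`; reducing modulo `x₁` and using the first syzygy proves this.
For `x₃` and `x₂` we use associated primes: since `x₁ ∈ √(I + (x₃))` and `x₃ ∈ √(I + (x₂))`,
an associated prime of `A ⧸ I` containing `x₃` (resp. `x₂`) would contain `x₁` (resp. `x₃`).
-/

open Ideal RingTheory.Sequence

section RegularSequence

variable {R : Type*} [CommRing R]

theorem isSMulRegular_quotient_sup_span_singleton_pow {J : Ideal R} {y z : R}
    (hy : IsSMulRegular (R ⧸ J) y) (hz : IsSMulRegular (R ⧸ (J ⊔ span {y})) z) (k : ℕ) :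
    IsSMulRegular (R ⧸ (J ⊔ span {y ^ k})) z := by
  rw [isSMulRegular_quotient_iff_mem_of_smul_mem] at hy hz ⊢
  simp only [smul_eq_mul, Submodule.mem_sup, mem_span_singleton', exists_exists_eq_and]
    at hy hz ⊢
  induction k with
  | zero => exact fun w _ ↦ ⟨0, J.zero_mem, w, by ring⟩
  | succ k ih =>
    rintro w ⟨j, hj, c, hjc⟩
    obtain ⟨i, hi, d, rfl⟩ := hz w ⟨j, hj, c * y ^ k, by rw [← hjc]; ring⟩
    have hdiff : z * d - c * y ^ k ∈ J := hy _ <| by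
      rw [show y * (z * d - c * y ^ k) = j - z * i by linear_combination -hjc]
      exact J.sub_mem hj (J.mul_mem_left z hi)
    obtain ⟨i', hi', e, rfl⟩ := ih d ⟨_, hdiff, c, by ring⟩
    exact ⟨i + i' * y, J.add_mem hi (J.mul_mem_right y hi'), e, by ring⟩

namespace RingTheory.Sequence.IsWeaklyRegular

theorem isSMulRegular_quotient_ofList_take {rs : List R} (h : IsWeaklyRegular R rs) (i : ℕ)
    (hi : i < rs.length) : IsSMulRegular (R ⧸ ofList (rs.take i)) rs[i] := by
  have := h.regular_mod_prev i hi
  rwa [smul_eq_mul, mul_top] at this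

theorem isSMulRegular_quotient_span_singleton {x y : R} {rs : List R}
    (h : IsWeaklyRegular R (x :: y :: rs)) : IsSMulRegular (R ⧸ span {x}) y := by
  have := h.isSMulRegular_quotient_ofList_take 1 (by simp)
  rwa [List.take_succ_cons, List.take_zero, ofList_singleton] at this

theorem isSMulRegular_quotient_span_pair_pow {x y z : R} {rs : List R}
    (h : IsWeaklyRegular R (x :: y :: z :: rs)) (k m : ℕ) :
    IsSMulRegular (R ⧸ span {x, y ^ k}) (z ^ m) := by
  have hz : IsSMulRegular (R ⧸ (span {x} ⊔ span {y})) z := by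
    have := h.isSMulRegular_quotient_ofList_take 2 (by simp)
    rwa [List.take_succ_cons, List.take_succ_cons, List.take_zero, ofList_cons,
      ofList_singleton] at this
  rw [span_insert]
  exact (isSMulRegular_quotient_sup_span_singleton_pow h.isSMulRegular_quotient_span_singleton
    hz k).pow m

end RingTheory.Sequence.IsWeaklyRegular

end RegularSequence

section AssociatedPrimes

variable {R : Type*} [CommRing R]

theorem IsSMulRegular.of_mem_radical_annihilator_sup_span [IsNoetherianRing R] {M : Type*}
    [AddCommGroup M] [Module R M] {x y : R} (hy : IsSMulRegular M y)
    (hyx : y ∈ (Module.annihilator R M ⊔ span {x}).radical) : IsSMulRegular M x := by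
  have hunion := Set.ext_iff.mp (biUnion_associatedPrimes_eq_compl_regular R M)
  by_contra hx
  obtain ⟨p, hp, hxp⟩ := Set.mem_iUnion₂.mp ((hunion x).mpr hx)
  have hann : Module.annihilator R M ≤ p :=
    Submodule.annihilator_top.symm.trans_le hp.annihilator_le
  have hyp : y ∈ p := hp.isPrime.radical_le_iff.mpr
    (sup_le hann ((span_singleton_le_iff_mem p).mpr hxp)) hyx
  exact (hunion y).mp (Set.mem_iUnion₂.mpr ⟨p, hp, hyp⟩) hy

theorem IsSMulRegular.of_mem_radical_sup_span [IsNoetherianRing R] {I : Ideal R} {x y : R}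
    (hy : IsSMulRegular (R ⧸ I) y) (hyx : y ∈ (I ⊔ span {x}).radical) :
    IsSMulRegular (R ⧸ I) x :=
  hy.of_mem_radical_annihilator_sup_span (by rwa [annihilator_quotient])

theorem mem_radical_sup_span_singleton_of_pow_sub_mul_pow_mem {I : Ideal R} {x y z : R}
    {n m : ℕ} (hm : 0 < m) (h : x ^ n - y * z ^ m ∈ I) : x ∈ (I ⊔ span {z}).radical :=
  ⟨n, by
    rw [show x ^ n = (x ^ n - y * z ^ m) + y * z ^ m by ring]
    exact add_mem (mem_sup_left h) (mem_sup_right (mul_mem_left _ _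
      (pow_mem_of_mem _ (mem_span_singleton_self z) m hm)))⟩

end AssociatedPrimes

namespace HerzogNorthcott

variable {R : Type*} [CommRing R] {x1 x2 x3 v1 v2 D : R} {a1 a2 a3 b1 b2 b3 : ℕ}

theorem mem_of_mul_mem_span_pair (hreg : IsWeaklyRegular R [x1, x2, x3]) (ha1 : 0 < a1)
    (hv1 : v1 = x1 ^ (a1 + b1) - x2 ^ b2 * x3 ^ a3)
    (hv2 : v2 = x2 ^ (a2 + b2) - x1 ^ a1 * x3 ^ b3)
    (hD : D = x3 ^ (a3 + b3) - x1 ^ b1 * x2 ^ a2)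
    {z : R} (hz : x1 * z ∈ span {v1, v2}) : z ∈ span {v1, v2, D} := by
  obtain ⟨a1, rfl⟩ := Nat.exists_eq_add_one_of_ne_zero ha1.ne'
  obtain ⟨s, t, hst⟩ := mem_span_pair.mp hz
  obtain ⟨w, hw⟩ := mem_span_singleton'.mp <| mem_of_isSMulRegular_quotient_of_smul_mem
    (hreg.isSMulRegular_quotient_span_singleton.pow b2)
    (x := t * x2 ^ a2 - s * x3 ^ a3) <| mem_span_singleton'.mpr
      ⟨z - s * x1 ^ (a1 + b1) + t * x1 ^ a1 * x3 ^ b3, by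
        linear_combination -hst + s * hv1 + t * hv2⟩
  obtain ⟨σ, h, hs⟩ := mem_span_pair.mp <| mem_of_isSMulRegular_quotient_of_smul_mem
    (hreg.isSMulRegular_quotient_span_pair_pow a2 a3) (x := s) <| mem_span_pair.mpr
      ⟨-w, t, by linear_combination -hw⟩
  obtain ⟨τ, ht⟩ := mem_span_singleton'.mp <| mem_of_isSMulRegular_quotient_of_smul_mem
    (hreg.isSMulRegular_quotient_span_singleton.pow a2)
    (x := t - h * x3 ^ a3) <| mem_span_singleton'.mpr
      ⟨w + σ * x3 ^ a3, by linear_combination hw + x3 ^ a3 * hs⟩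
  have hx1 : IsSMulRegular R x1 := ((isWeaklyRegular_cons_iff R _ _).mp hreg).1
  -- `h (x₂^a₂ v₁ + x₃^a₃ v₂) = -h x₁^a₁ D` by the first syzygy
  have hzI : z = σ * v1 + τ * v2 - h * x1 ^ a1 * D := hx1 <| by
    show x1 * z = x1 * _
    linear_combination -hst - v1 * hs - v2 * ht + h * x2 ^ a2 * hv1
        + h * x3 ^ a3 * hv2 + h * x1 ^ (a1 + 1) * hD
  rw [hzI]
  exact Submodule.mem_span_triple.mpr ⟨σ, τ, -(h * x1 ^ a1), by simp only [smul_eq_mul]; ring⟩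

theorem isSMulRegular_quotient (hreg : IsWeaklyRegular R [x1, x2, x3]) (ha1 : 0 < a1)
    (hb1 : 0 < b1) (hv1 : v1 = x1 ^ (a1 + b1) - x2 ^ b2 * x3 ^ a3)
    (hv2 : v2 = x2 ^ (a2 + b2) - x1 ^ a1 * x3 ^ b3)
    (hD : D = x3 ^ (a3 + b3) - x1 ^ b1 * x2 ^ a2) :
    IsSMulRegular (R ⧸ span {v1, v2, D}) x1 := by
  rw [isSMulRegular_quotient_iff_mem_of_smul_mem]
  intro y hy
  obtain ⟨a1, rfl⟩ := Nat.exists_eq_add_one_of_ne_zero ha1.ne'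
  obtain ⟨b1, rfl⟩ := Nat.exists_eq_add_one_of_ne_zero hb1.ne'
  obtain ⟨s, t, u, hstu⟩ := Submodule.mem_span_triple.mp hy
  simp only [smul_eq_mul] at hstu
  obtain ⟨p, q, hu⟩ := mem_span_pair.mp <| mem_of_isSMulRegular_quotient_of_smul_mem
    (hreg.isSMulRegular_quotient_span_pair_pow b2 (a3 + b3)) (x := u) <| mem_span_pair.mpr
      ⟨y - s * x1 ^ (a1 + b1 + 1) + t * x1 ^ a1 * x3 ^ b3 + u * x1 ^ b1 * x2 ^ a2,
        s * x3 ^ a3 - t * x2 ^ a2, by linear_combination -hstu + s * hv1 + t * hv2 + u * hD⟩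
  -- `q x₂^b₂ D = -q (x₃^b₃ v₁ + x₁^b₁ v₂)` by the second syzygy
  have hyD : y - p * D ∈ span {v1, v2, D} := mem_of_mul_mem_span_pair hreg ha1 hv1 hv2 hD <|
    mem_span_pair.mpr ⟨s - q * x3 ^ b3, t - q * x1 ^ (b1 + 1), by
      linear_combination hstu + D * hu - q * x2 ^ b2 * hD - q * x3 ^ b3 * hv1
        - q * x1 ^ (b1 + 1) * hv2⟩
  simpa using add_mem hyD (mul_mem_left _ p (subset_span (by simp) : D ∈ span {v1, v2, D}))

end HerzogNorthcott

theorem stmt_2_general {A : Type*} [CommRing A] [IsNoetherianRing A] (x1 x2 x3 : A)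
    (a1 a2 a3 b1 b2 b3 c1 c2 c3 : ℕ)
    (ha1 : 0 < a1) (ha2 : 0 < a2) (ha3 : 0 < a3)
    (hb1 : 0 < b1)
    (hc1 : c1 = a1 + b1) (hc2 : c2 = a2 + b2) (hc3 : c3 = a3 + b3)
    (hreg : RingTheory.Sequence.IsRegular A [x1, x2, x3])
    (v1 v2 D : A)
    (hv1 : v1 = x1 ^ c1 - x2 ^ b2 * x3 ^ a3)
    (hv2 : v2 = x2 ^ c2 - x1 ^ a1 * x3 ^ b3)
    (hD : D = x3 ^ c3 - x1 ^ b1 * x2 ^ a2)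
    (I : Ideal A) (hI : I = Ideal.span {v1, v2, D}) :
    (∀ y : A, x1 * y ∈ I → y ∈ I) ∧
    (∀ y : A, x2 * y ∈ I → y ∈ I) ∧
    (∀ y : A, x3 * y ∈ I → y ∈ I) := by
  subst hc1 hc2 hc3 hI
  have h1 := HerzogNorthcott.isSMulRegular_quotient hreg.toIsWeaklyRegular ha1 hb1 hv1 hv2 hD
  have h3 : IsSMulRegular (A ⧸ span {v1, v2, D}) x3 := h1.of_mem_radical_sup_span <|
    mem_radical_sup_span_singleton_of_pow_sub_mul_pow_mem ha3 <| by
      rw [← hv1]; exact subset_span (by simp)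
  have h2 : IsSMulRegular (A ⧸ span {v1, v2, D}) x2 := h3.of_mem_radical_sup_span <|
    mem_radical_sup_span_singleton_of_pow_sub_mul_pow_mem ha2 <| by
      rw [← hD]; exact subset_span (by simp)
  simp only [isSMulRegular_quotient_iff_mem_of_smul_mem, smul_eq_mul] at h1 h2 h3
  exact ⟨h1, h2, h3⟩

/-- If `x1, x2, x3` is a regular sequence and `grade(v1, v2) = 2`, then each of
`x1, x2, x3` is a non-zerodivisor modulo the Herzog–Northcott ideal `I = (v1, v2, D)`. -/
theorem stmt_2 {A : Type*} [CommRing A] [IsNoetherianRing A] (x1 x2 x3 : A)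
    (a1 a2 a3 b1 b2 b3 c1 c2 c3 : ℕ)
    (ha1 : 0 < a1) (ha2 : 0 < a2) (ha3 : 0 < a3)
    (hb1 : 0 < b1) (hb2 : 0 < b2) (hb3 : 0 < b3)
    (hc1 : c1 = a1 + b1) (hc2 : c2 = a2 + b2) (hc3 : c3 = a3 + b3)
    (hproper : Ideal.span {x1, x2, x3} ≠ ⊤)
    (hht : idealHeight (Ideal.span {x1, x2, x3}) = 3)
    (hreg : RingTheory.Sequence.IsRegular A [x1, x2, x3])
    (v1 v2 D : A)
    (hv1 : v1 = x1 ^ c1 - x2 ^ b2 * x3 ^ a3)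
    (hv2 : v2 = x2 ^ c2 - x1 ^ a1 * x3 ^ b3)
    (hD : D = x3 ^ c3 - x1 ^ b1 * x2 ^ a2)
    (hgrade : idealGrade (Ideal.span {v1, v2}) = 2)
    (I : Ideal A) (hI : I = Ideal.span {v1, v2, D}) :
    (∀ y : A, x1 * y ∈ I → y ∈ I) ∧
    (∀ y : A, x2 * y ∈ I → y ∈ I) ∧
    (∀ y : A, x3 * y ∈ I → y ∈ I) :=
  stmt_2_general x1 x2 x3 a1 a2 a3 b1 b2 b3 c1 c2 c3 ha1 ha2 ha3 hb1 hc1 hc2 hc3 hreg v1 v2 D hv1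
    hv2 hD I hI
end

section
/- If x1, x2, x3 is a regular sequence in A and grade(v1, v2) = 2, then I ∩ (x1^{a1}, x2^{b2}) = (v1, v2), where I = (v1, v2, D) is the Herzog–Northcott ideal. -/
namespace HNaux

variable {A : Type*} [CommRing A]

/-- `x` is a nonzerodivisor modulo the ideal `J`. -/
def RM (J : Ideal A) (x : A) : Prop := ∀ γ : A, γ * x ∈ J → γ ∈ J

lemma rm_of_smulreg {N : Submodule A A} {x : A}
    (h : IsSMulRegular (A ⧸ N) x) : RM N x := by
  intro γ hγ
  have h0 : x • (Submodule.Quotient.mk γ : A ⧸ N) = x • (0 : A ⧸ N) := by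
    rw [smul_zero, ← Submodule.Quotient.mk_smul, Submodule.Quotient.mk_eq_zero]
    simpa [smul_eq_mul, mul_comm] using hγ
  exact (Submodule.Quotient.mk_eq_zero N).mp (h h0)

lemma RM.pow {J : Ideal A} {x : A} (h : RM J x) (k : ℕ) : RM J (x ^ k) := by
  induction k with
  | zero => intro γ hγ; simpa using hγ
  | succ n ih =>
    intro γ hγ
    have h1 : (γ * x) * x ^ n ∈ J := by
      rw [mul_assoc, ← pow_succ']; exact hγ
    exact h γ (ih _ h1)

lemma L1 {J : Ideal A} {x y : A} (hx : RM J x) (hy : RM (J ⊔ Ideal.span {x}) y)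
    (k : ℕ) : RM (J ⊔ Ideal.span {x ^ k}) y := by
  induction k with
  | zero =>
    intro γ _
    exact Submodule.mem_sup_right (Ideal.mem_span_singleton.mpr (by simp))
  | succ n ih =>
    intro γ hγ
    have hle : (Ideal.span {x ^ (n+1)} : Ideal A) ≤ Ideal.span {x} :=
      Ideal.span_le.mpr (by
        simp [Ideal.mem_span_singleton, dvd_pow_self x (Nat.succ_ne_zero n)])
    have h1 : γ ∈ J ⊔ Ideal.span {x} :=
      hy γ (sup_le_sup_left hle J hγ)
    obtain ⟨j, hj, z, hz, hjz⟩ := Submodule.mem_sup.mp h1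
    obtain ⟨γ', hγ'⟩ := Ideal.mem_span_singleton.mp hz
    obtain ⟨j', hj', w, hw, hjw⟩ := Submodule.mem_sup.mp hγ
    obtain ⟨s, hs⟩ := Ideal.mem_span_singleton.mp hw
    have key : (γ' * y - s * x ^ n) * x = j' - j * y := by
      have e1 : x * γ' = γ - j := by rw [← hγ']; linear_combination hjz
      have e2 : x ^ (n+1) * s = γ * y - j' := by rw [← hs]; linear_combination hjw
      calc (γ' * y - s * x ^ n) * x = (x * γ') * y - x ^ (n+1) * s := by ring
        _ = j' - j * y := by rw [e1, e2]; ring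
    have hmemJ : (γ' * y - s * x ^ n) * x ∈ J := by
      rw [key]; exact J.sub_mem hj' (J.mul_mem_right y hj)
    have h2 : γ' * y - s * x ^ n ∈ J := hx _ hmemJ
    have h3 : γ' * y ∈ J ⊔ Ideal.span {x ^ n} := by
      have : γ' * y = (γ' * y - s * x ^ n) + s * x ^ n := by ring
      rw [this]
      exact Submodule.add_mem _ (Submodule.mem_sup_left h2)
        (Submodule.mem_sup_right (Ideal.mem_span_singleton.mpr ⟨s, mul_comm s _⟩))
    obtain ⟨j'', hj'', u, hu, hju⟩ := Submodule.mem_sup.mp (ih γ' h3)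
    obtain ⟨t, ht⟩ := Ideal.mem_span_singleton.mp hu
    have hfin : γ = (j + x * j'') + x ^ (n+1) * t := by
      linear_combination -hjz + hγ' - x * hju + x * ht
    rw [hfin]
    exact Submodule.add_mem _
      (Submodule.mem_sup_left (J.add_mem hj (J.mul_mem_left x hj'')))
      (Submodule.mem_sup_right (Ideal.mem_span_singleton.mpr ⟨t, rfl⟩))

variable {x1 x2 x3 : A}

lemma P (H1 : RM (⊥ : Ideal A) x1) (H2 : RM (Ideal.span {x1}) x2)
    (H3 : RM (Ideal.span {x1} ⊔ Ideal.span {x2}) x3) (k l : ℕ) :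
    RM (Ideal.span {x1 ^ k} ⊔ Ideal.span {x2 ^ l}) x3 := by
  -- x3 is regular mod (x1, x2^l)
  have h31 : ∀ l : ℕ, RM (Ideal.span {x1} ⊔ Ideal.span {x2 ^ l}) x3 :=
    fun l => L1 H2 H3 l
  -- x2^l is regular mod (x1)
  have h2l : ∀ l : ℕ, RM (Ideal.span {x1}) (x2 ^ l) := fun l => H2.pow l
  -- x1 is regular mod (x2^l)
  have h12 : ∀ l : ℕ, RM (Ideal.span {x2 ^ l}) x1 := by
    intro l γ hγ
    obtain ⟨t, ht⟩ := Ideal.mem_span_singleton.mp hγ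
    have ht2 : t * x2 ^ l ∈ Ideal.span {x1} := by
      have he : t * x2 ^ l = γ * x1 := by linear_combination -ht
      rw [he]; exact Ideal.mem_span_singleton.mpr ⟨γ, mul_comm γ x1⟩
    obtain ⟨t', ht'⟩ := Ideal.mem_span_singleton.mp (h2l l t ht2)
    have hz : (γ - t' * x2 ^ l) * x1 ∈ (⊥ : Ideal A) := by
      rw [Ideal.mem_bot]; linear_combination ht + x2 ^ l * ht'
    have := H1 _ hz
    rw [Ideal.mem_bot, sub_eq_zero] at this
    exact Ideal.mem_span_singleton.mpr ⟨t', by rw [this]; ring⟩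
  have h1k2l : ∀ k l : ℕ, RM (Ideal.span {x2 ^ l}) (x1 ^ k) :=
    fun k l => (h12 l).pow k
  induction k with
  | zero =>
    intro γ _
    exact Submodule.mem_sup_left (Ideal.mem_span_singleton.mpr (by simp))
  | succ n ih =>
    intro γ hγ
    obtain ⟨S, hS, T, hT, hST⟩ := Submodule.mem_sup.mp hγ
    obtain ⟨s, hs⟩ := Ideal.mem_span_singleton.mp hS
    obtain ⟨t, ht⟩ := Ideal.mem_span_singleton.mp hT
    have hST' : x1 ^ (n+1) * s + x2 ^ l * t = γ * x3 := by
      rw [← hs, ← ht]; exact hST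
    have hγ' : γ * x3 ∈ Ideal.span {x1 ^ n} ⊔ Ideal.span {x2 ^ l} := by
      rw [← hST']
      exact Submodule.add_mem _
        (Submodule.mem_sup_left (Ideal.mem_span_singleton.mpr ⟨x1 * s, by ring⟩))
        (Submodule.mem_sup_right (Ideal.mem_span_singleton.mpr ⟨t, rfl⟩))
    obtain ⟨U, hU, V, hV, hUV⟩ := Submodule.mem_sup.mp (ih γ hγ')
    obtain ⟨δ, hδ⟩ := Ideal.mem_span_singleton.mp hU
    obtain ⟨u, hu⟩ := Ideal.mem_span_singleton.mp hV
    have hUV' : x1 ^ n * δ + x2 ^ l * u = γ := by rw [← hδ, ← hu]; exact hUV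
    have key : (δ * x3 - s * x1) * x1 ^ n = (t - u * x3) * x2 ^ l := by
      linear_combination x3 * hUV' - hST'
    have hw1 : (δ * x3 - s * x1) * x1 ^ n ∈ Ideal.span {x2 ^ l} := by
      rw [key]; exact Ideal.mem_span_singleton.mpr ⟨t - u * x3, mul_comm _ _⟩
    obtain ⟨w, hw⟩ := Ideal.mem_span_singleton.mp (h1k2l n l _ hw1)
    have hδ3 : δ * x3 ∈ Ideal.span {x1} ⊔ Ideal.span {x2 ^ l} := by
      have : δ * x3 = s * x1 + x2 ^ l * w := by linear_combination hw
      rw [this]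
      exact Submodule.add_mem _
        (Submodule.mem_sup_left (Ideal.mem_span_singleton.mpr ⟨s, mul_comm s x1⟩))
        (Submodule.mem_sup_right (Ideal.mem_span_singleton.mpr ⟨w, rfl⟩))
    obtain ⟨U', hU', V', hV', hUV2⟩ := Submodule.mem_sup.mp (h31 l δ hδ3)
    obtain ⟨δ', hδ'⟩ := Ideal.mem_span_singleton.mp hU'
    obtain ⟨e, he⟩ := Ideal.mem_span_singleton.mp hV'
    have hδeq : x1 * δ' + x2 ^ l * e = δ := by rw [← hδ', ← he]; exact hUV2
    have hfin : γ = x1 ^ (n+1) * δ' + x2 ^ l * (x1 ^ n * e + u) := by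
      linear_combination -hUV' - x1 ^ n * hδeq
    rw [hfin]
    exact Submodule.add_mem _
      (Submodule.mem_sup_left (Ideal.mem_span_singleton.mpr ⟨δ', rfl⟩))
      (Submodule.mem_sup_right (Ideal.mem_span_singleton.mpr ⟨x1 ^ n * e + u, rfl⟩))

end HNaux

open HNaux in
/-- If `x1, x2, x3` is a regular sequence and `grade(v1, v2) = 2`, then
`I ∩ (x1^{a1}, x2^{b2}) = (v1, v2)`. -/
theorem stmt_3 {A : Type*} [CommRing A] [IsNoetherianRing A] (x1 x2 x3 : A)
    (a1 a2 a3 b1 b2 b3 c1 c2 c3 : ℕ)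
    (ha1 : 0 < a1) (ha2 : 0 < a2) (ha3 : 0 < a3)
    (hb1 : 0 < b1) (hb2 : 0 < b2) (hb3 : 0 < b3)
    (hc1 : c1 = a1 + b1) (hc2 : c2 = a2 + b2) (hc3 : c3 = a3 + b3)
    (hproper : Ideal.span {x1, x2, x3} ≠ ⊤)
    (hht : idealHeight (Ideal.span {x1, x2, x3}) = 3)
    (hreg : RingTheory.Sequence.IsRegular A [x1, x2, x3])
    (v1 v2 D : A)
    (hv1 : v1 = x1 ^ c1 - x2 ^ b2 * x3 ^ a3)
    (hv2 : v2 = x2 ^ c2 - x1 ^ a1 * x3 ^ b3)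
    (hD : D = x3 ^ c3 - x1 ^ b1 * x2 ^ a2)
    (hgrade : idealGrade (Ideal.span {v1, v2}) = 2)
    (I : Ideal A) (hI : I = Ideal.span {v1, v2, D}) :
    I ⊓ Ideal.span {x1 ^ a1, x2 ^ b2} = Ideal.span {v1, v2} := by
  -- extract element-level regularity from the regular sequence
  obtain ⟨hwr, -⟩ := hreg
  have r0 := hwr.regular_mod_prev 0 (by norm_num)
  have r1 := hwr.regular_mod_prev 1 (by norm_num)
  have r2 := hwr.regular_mod_prev 2 (by norm_num)
  have e0 : ((Ideal.ofList (List.take 0 [x1,x2,x3])) • ⊤ : Submodule A A)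
      = (⊥ : Ideal A) := by
    rw [smul_eq_mul, Ideal.mul_top]; simp
  have e1 : ((Ideal.ofList (List.take 1 [x1,x2,x3])) • ⊤ : Submodule A A)
      = (Ideal.span {x1} : Ideal A) := by
    rw [smul_eq_mul, Ideal.mul_top]; simp
  have e2 : ((Ideal.ofList (List.take 2 [x1,x2,x3])) • ⊤ : Submodule A A)
      = (Ideal.span {x1} ⊔ Ideal.span {x2} : Ideal A) := by
    rw [smul_eq_mul, Ideal.mul_top]; simp [sup_bot_eq]
  rw [e0] at r0; rw [e1] at r1; rw [e2] at r2
  simp only [List.getElem_cons_zero, List.getElem_cons_succ] at r0 r1 r2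
  have H1 : RM (⊥ : Ideal A) x1 := rm_of_smulreg r0
  have H2 : RM (Ideal.span {x1}) x2 := rm_of_smulreg r1
  have H3 : RM (Ideal.span {x1} ⊔ Ideal.span {x2}) x3 := rm_of_smulreg r2
  set J2 : Ideal A := Ideal.span {x1 ^ a1, x2 ^ b2} with hJ2
  set V : Ideal A := Ideal.span {v1, v2} with hV
  have hv1J2 : v1 ∈ J2 := Ideal.mem_span_pair.mpr
    ⟨x1 ^ b1, -(x3 ^ a3), by rw [hv1, hc1]; ring⟩
  have hv2J2 : v2 ∈ J2 := Ideal.mem_span_pair.mpr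
    ⟨-(x3 ^ b3), x2 ^ a2, by rw [hv2, hc2]; ring⟩
  have hVJ2 : V ≤ J2 := by
    rw [hV, Ideal.span_le]
    rintro z hz
    simp only [Set.mem_insert_iff, Set.mem_singleton_iff] at hz
    rcases hz with rfl | rfl
    · exact hv1J2
    · exact hv2J2
  have hVI : V ≤ I := by
    rw [hI, hV]
    exact Ideal.span_mono (by intro z hz; simp only [Set.mem_insert_iff,
      Set.mem_singleton_iff] at hz ⊢; tauto)
  -- regularity of x3 mod J2
  have hRMx3 : RM J2 x3 := by
    have := P H1 H2 H3 a1 b2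
    rwa [hJ2, Ideal.span_insert]
  refine le_antisymm ?_ (le_inf hVI hVJ2)
  intro z hz
  obtain ⟨hzI, hzJ2⟩ := hz
  rw [hI] at hzI
  obtain ⟨α, w, hw, hzw⟩ := Ideal.mem_span_insert.mp hzI
  obtain ⟨β, γ, hβγ⟩ := Ideal.mem_span_pair.mp hw
  have hzeq : z = α * v1 + (β * v2 + γ * D) := by rw [hzw, hβγ]
  have hγD : γ * D ∈ J2 := by
    have : γ * D = z - α * v1 - β * v2 := by rw [hzeq]; ring
    rw [this]
    exact J2.sub_mem (J2.sub_mem hzJ2 (J2.mul_mem_left α hv1J2))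
      (J2.mul_mem_left β hv2J2)
  -- nilpotency trick: γ * (x3^c3)^n ≡ γ * (x1^b1 x2^a2)^n mod J2
  have claim : ∀ n : ℕ,
      γ * (x3 ^ c3) ^ n - γ * (x1 ^ b1 * x2 ^ a2) ^ n ∈ J2 := by
    intro n
    induction n with
    | zero => simp
    | succ p ih =>
      have e : γ * (x3 ^ c3) ^ (p+1) - γ * (x1 ^ b1 * x2 ^ a2) ^ (p+1)
          = (γ * (x3 ^ c3) ^ p - γ * (x1 ^ b1 * x2 ^ a2) ^ p) * x3 ^ c3
            + (x1 ^ b1 * x2 ^ a2) ^ p * (γ * D) := by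
        rw [hD]; ring
      rw [e]
      exact J2.add_mem (J2.mul_mem_right _ ih) (J2.mul_mem_left _ hγD)
  have hx1J2 : x1 ^ a1 ∈ J2 := Ideal.subset_span (by simp)
  have hmn : (x1 ^ b1 * x2 ^ a2) ^ a1 ∈ J2 := by
    obtain ⟨d, hd⟩ : ∃ d, b1 * a1 = a1 + d :=
      ⟨b1 * a1 - a1, by have := Nat.le_mul_of_pos_left a1 hb1; omega⟩
    have e : (x1 ^ b1 * x2 ^ a2) ^ a1 = x1 ^ a1 * (x1 ^ d * (x2 ^ a2) ^ a1) := by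
      rw [mul_pow, ← pow_mul, hd, pow_add]; ring
    rw [e]
    exact J2.mul_mem_right _ hx1J2
  have hγx3 : γ * (x3 ^ c3) ^ a1 ∈ J2 := by
    have heq : γ * (x3 ^ c3) ^ a1
        = (γ * (x3 ^ c3) ^ a1 - γ * (x1 ^ b1 * x2 ^ a2) ^ a1)
          + γ * (x1 ^ b1 * x2 ^ a2) ^ a1 := by ring
    rw [heq]
    exact J2.add_mem (claim a1) (J2.mul_mem_left γ hmn)
  have hγJ2 : γ ∈ J2 := ((hRMx3.pow c3).pow a1) γ hγx3
  obtain ⟨p, q, hpq⟩ := Ideal.mem_span_pair.mp hγJ2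
  have hγDV : γ * D ∈ V := by
    rw [hV]
    refine Ideal.mem_span_pair.mpr
      ⟨-(p * x2 ^ a2) - q * x3 ^ b3, -(p * x3 ^ a3) - q * x1 ^ b1, ?_⟩
    rw [hv1, hv2, hD, hc1, hc2, hc3, ← hpq]; ring
  have hv1V : v1 ∈ V := Ideal.subset_span (by simp)
  have hv2V : v2 ∈ V := Ideal.subset_span (by simp)
  rw [hzeq]
  exact V.add_mem (V.mul_mem_left α hv1V)
    (V.add_mem (V.mul_mem_left β hv2V) hγDV)
end

section
/- If x1, x2, x3 is a regular sequence in A and grade(v1, v2) = 2, then the Herzog–Northcott ideal I satisfies I = (v1, v2) : x1^{a1} = (v1, v2) : x2^{b2} = (v1, v2) : (x1^{a1}, x2^{b2}). -/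
open Ideal

section HNaux
variable {A : Type*} [CommRing A]

lemma HN_reg_unpack (rs : List A) (h : RingTheory.Sequence.IsWeaklyRegular A rs)
    (i : ℕ) (hi : i < rs.length) (y : A) (hy : rs[i] * y ∈ Ideal.ofList (rs.take i)) :
    y ∈ Ideal.ofList (rs.take i) := by
  have h0 := h.regular_mod_prev i hi
  have hst : (Ideal.ofList (rs.take i) • ⊤ : Submodule A A) = Ideal.ofList (rs.take i) := by
    rw [smul_eq_mul, Ideal.mul_top]
  have hz : rs[i] • (Submodule.Quotient.mk
      (p := (Ideal.ofList (rs.take i) • ⊤ : Submodule A A)) y) = 0 := by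
    rw [← Submodule.Quotient.mk_smul, Submodule.Quotient.mk_eq_zero, hst]
    simpa [smul_eq_mul] using hy
  have := h0 (by rw [hz, smul_zero] : rs[i] • _ = rs[i] • (0 : A ⧸ _))
  rwa [Submodule.Quotient.mk_eq_zero, hst] at this

lemma HN_pow_nzd {x1 : A} (R1 : ∀ y : A, x1 * y = 0 → y = 0) (m : ℕ) :
    ∀ y : A, x1 ^ m * y = 0 → y = 0 := by
  induction m with
  | zero => intro y hy; simpa using hy
  | succ m ih =>
    intro y hy
    exact ih y (R1 _ (by linear_combination hy))

lemma HN_reg2_pow1 {x1 x2 : A} (R1 : ∀ y : A, x1 * y = 0 → y = 0)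
    (R2 : ∀ y : A, x2 * y ∈ span {x1} → y ∈ span {x1}) (a : ℕ) :
    ∀ y : A, x2 * y ∈ span {x1 ^ a} → y ∈ span {x1 ^ a} := by
  induction a with
  | zero => intro y _; simpa using (Ideal.mem_span_singleton.mpr (one_dvd y))
  | succ a ih =>
    intro y hy
    obtain ⟨v, hv⟩ := Ideal.mem_span_singleton'.mp hy
    have hy1 : y ∈ span {x1} :=
      R2 _ (Ideal.mem_span_singleton'.mpr ⟨v * x1 ^ a, by linear_combination hv⟩)
    obtain ⟨y', hy'⟩ := Ideal.mem_span_singleton'.mp hy1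
    have hcan : x2 * y' = x1 ^ a * v := by
      have := R1 (x2 * y' - x1 ^ a * v) (by linear_combination x2 * hy' - hv)
      linear_combination this
    obtain ⟨c, hc⟩ := Ideal.mem_span_singleton'.mp
      (ih y' (Ideal.mem_span_singleton'.mpr ⟨v, by linear_combination -hcan⟩))
    exact Ideal.mem_span_singleton'.mpr ⟨c, by linear_combination hy' + x1 * hc⟩

lemma HN_reg2_pow {x1 x2 : A} (R1 : ∀ y : A, x1 * y = 0 → y = 0)
    (R2 : ∀ y : A, x2 * y ∈ span {x1} → y ∈ span {x1}) (a m : ℕ) :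
    ∀ y : A, x2 ^ m * y ∈ span {x1 ^ a} → y ∈ span {x1 ^ a} := by
  induction m with
  | zero => intro y hy; simpa using hy
  | succ m ih =>
    intro y hy
    exact ih y (HN_reg2_pow1 R1 R2 a _ (by
      have : x2 * (x2 ^ m * y) = x2 ^ (m+1) * y := by ring
      rwa [this]))

lemma HN_reg2_powL {x1 x2 : A} (R1 : ∀ y : A, x1 * y = 0 → y = 0)
    (R2 : ∀ y : A, x2 * y ∈ span {x1} → y ∈ span {x1}) (m : ℕ) :
    ∀ y : A, x2 ^ m * y ∈ span {x1} → y ∈ span {x1} := by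
  have := HN_reg2_pow R1 R2 1 m
  simpa [pow_one] using this

lemma HN_reg3_b {x1 x2 x3 : A} (R1 : ∀ y : A, x1 * y = 0 → y = 0)
    (R2 : ∀ y : A, x2 * y ∈ span {x1} → y ∈ span {x1})
    (R3 : ∀ y : A, x3 * y ∈ span {x1, x2} → y ∈ span {x1, x2}) (b : ℕ) :
    ∀ y : A, x3 * y ∈ span {x1, x2 ^ b} → y ∈ span {x1, x2 ^ b} := by
  induction b with
  | zero => intro y _; exact Ideal.mem_span_pair.mpr ⟨0, y, by ring⟩
  | succ b ih =>
    intro y hy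
    obtain ⟨u, w, huw⟩ := Ideal.mem_span_pair.mp hy
    have hy1 : y ∈ span {x1, x2} :=
      R3 _ (Ideal.mem_span_pair.mpr ⟨u, x2 ^ b * w, by linear_combination huw⟩)
    obtain ⟨p, q, hpq⟩ := Ideal.mem_span_pair.mp hy1
    have h2 : x3 * q - x2 ^ b * w ∈ span {x1} := by
      apply R2
      exact Ideal.mem_span_singleton'.mpr ⟨u - x3 * p, by
        linear_combination huw - x3 * hpq⟩
    obtain ⟨d, hd⟩ := Ideal.mem_span_singleton'.mp h2
    have h3 : q ∈ span {x1, x2 ^ b} :=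
      ih q (Ideal.mem_span_pair.mpr ⟨d, w, by linear_combination hd⟩)
    obtain ⟨q1, q2, hq⟩ := Ideal.mem_span_pair.mp h3
    exact Ideal.mem_span_pair.mpr ⟨p + x2 * q1, q2, by
      linear_combination hpq + x2 * hq⟩

lemma HN_reg3_ab {x1 x2 x3 : A} (R1 : ∀ y : A, x1 * y = 0 → y = 0)
    (R2 : ∀ y : A, x2 * y ∈ span {x1} → y ∈ span {x1})
    (R3 : ∀ y : A, x3 * y ∈ span {x1, x2} → y ∈ span {x1, x2}) (a b : ℕ) :
    ∀ y : A, x3 * y ∈ span {x1 ^ a, x2 ^ b} → y ∈ span {x1 ^ a, x2 ^ b} := by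
  induction a with
  | zero => intro y _; exact Ideal.mem_span_pair.mpr ⟨y, 0, by ring⟩
  | succ a ih =>
    intro y hy
    obtain ⟨u, w, huw⟩ := Ideal.mem_span_pair.mp hy
    have hy1 : y ∈ span {x1, x2 ^ b} :=
      HN_reg3_b R1 R2 R3 b _ (Ideal.mem_span_pair.mpr ⟨x1 ^ a * u, w, by
        linear_combination huw⟩)
    obtain ⟨p, q, hpq⟩ := Ideal.mem_span_pair.mp hy1
    have h2 : x3 * q - w ∈ span {x1} := by
      apply HN_reg2_powL R1 R2 b  -- x2^b * z ∈ span{x1} → z ∈ span{x1}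
      exact Ideal.mem_span_singleton'.mpr ⟨u * x1 ^ a - x3 * p, by
        linear_combination huw - x3 * hpq⟩
    obtain ⟨d, hd⟩ := Ideal.mem_span_singleton'.mp h2
    have hcan : x3 * p = x1 ^ a * u - x2 ^ b * d := by
      have := R1 (x3 * p - (x1 ^ a * u - x2 ^ b * d))
        (by linear_combination x3 * hpq - huw + x2 ^ b * hd)
      linear_combination this
    have h3 : p ∈ span {x1 ^ a, x2 ^ b} :=
      ih p (Ideal.mem_span_pair.mpr ⟨u, -d, by linear_combination -hcan⟩)
    obtain ⟨p1, p2, hp⟩ := Ideal.mem_span_pair.mp h3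
    exact Ideal.mem_span_pair.mpr ⟨p1, x1 * p2 + q, by
      linear_combination hpq + x1 * hp⟩

lemma HN_reg3_pow {x1 x2 x3 : A} (R1 : ∀ y : A, x1 * y = 0 → y = 0)
    (R2 : ∀ y : A, x2 * y ∈ span {x1} → y ∈ span {x1})
    (R3 : ∀ y : A, x3 * y ∈ span {x1, x2} → y ∈ span {x1, x2}) (a b m : ℕ) :
    ∀ y : A, x3 ^ m * y ∈ span {x1 ^ a, x2 ^ b} → y ∈ span {x1 ^ a, x2 ^ b} := by
  induction m with
  | zero => intro y hy; simpa using hy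
  | succ m ih =>
    intro y hy
    refine ih y (HN_reg3_ab R1 R2 R3 a b _ ?_)
    have : x3 * (x3 ^ m * y) = x3 ^ (m+1) * y := by ring
    rwa [this]

lemma HN_koszul3 {X Y Z : A} (NX : ∀ y : A, X * y = 0 → y = 0)
    (NY : ∀ y : A, Y * y ∈ span {X} → y ∈ span {X})
    (NZ : ∀ y : A, Z * y ∈ span {X, Y} → y ∈ span {X, Y})
    (a b c : A) (h : a * X + b * Y + c * Z = 0) :
    ∃ e f g : A, e * X + f * Y = c ∧ g * X - f * Z = b ∧ -(e * Z) - g * Y = a := by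
  have hc : c ∈ span {X, Y} :=
    NZ c (Ideal.mem_span_pair.mpr ⟨-a, -b, by linear_combination -h⟩)
  obtain ⟨e, f, hef⟩ := Ideal.mem_span_pair.mp hc
  have hb : b + f * Z ∈ span {X} :=
    NY _ (Ideal.mem_span_singleton'.mpr ⟨-(a + e * Z), by linear_combination -h - Z * hef⟩)
  obtain ⟨g, hg⟩ := Ideal.mem_span_singleton'.mp hb
  have ha : a = -(e * Z) - g * Y := by
    have := NX (a + e * Z + g * Y) (by linear_combination h + Z * hef + Y * hg)
    linear_combination this
  exact ⟨e, f, g, hef, by linear_combination hg, ha.symm⟩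

lemma HN_h1 {v1 v2 r s0 : A} (Nr : ∀ y : A, r * y = 0 → y = 0)
    (Ns : ∀ y : A, s0 * y ∈ span {r} → y ∈ span {r})
    (hrJ : r ∈ span {v1, v2}) (hsJ : s0 ∈ span {v1, v2})
    (α β : A) (hrel : α * v1 + β * v2 = 0) :
    ∃ σ : A, α = σ * v2 ∧ β = -(σ * v1) := by
  obtain ⟨p, q, hr⟩ := Ideal.mem_span_pair.mp hrJ
  obtain ⟨u, w, hs⟩ := Ideal.mem_span_pair.mp hsJ
  have h1 : α * r = (α * q - β * p) * v2 := by linear_combination p * hrel - α * hr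
  have h2 : β * r = -((α * q - β * p) * v1) := by linear_combination q * hrel - β * hr
  have h3 : α * s0 = (α * w - β * u) * v2 := by linear_combination u * hrel - α * hs
  have h4 : β * s0 = -((α * w - β * u) * v1) := by linear_combination w * hrel - β * hs
  have hv1 : (s0 * (α * q - β * p) - r * (α * w - β * u)) * v1 = 0 := by
    linear_combination s0 * h2 - r * h4
  have hv2 : (s0 * (α * q - β * p) - r * (α * w - β * u)) * v2 = 0 := by
    linear_combination r * h3 - s0 * h1
  have h5 : s0 * (α * q - β * p) - r * (α * w - β * u) = 0 := by
    apply Nr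
    linear_combination p * hv1 + q * hv2 - (s0 * (α * q - β * p) - r * (α * w - β * u)) * hr
  have hδ : s0 * (α * q - β * p) ∈ span {r} :=
    Ideal.mem_span_singleton'.mpr ⟨α * w - β * u, by linear_combination -h5⟩
  obtain ⟨σ, hσ⟩ := Ideal.mem_span_singleton'.mp (Ns _ hδ)
  refine ⟨σ, ?_, ?_⟩
  · have := Nr (α - σ * v2) (by linear_combination h1 - v2 * hσ)
    linear_combination this
  · have := Nr (β + σ * v1) (by linear_combination h2 + v1 * hσ)
    linear_combination this

lemma HN_case1 {A1 A2 A3 B1 B2 B3 r s0 : A}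
    (NA1 : ∀ y : A, A1 * y = 0 → y = 0)
    (NB1 : ∀ y : A, B1 * y = 0 → y = 0)
    (NA2 : ∀ y : A, A2 * y ∈ span {A1} → y ∈ span {A1})
    (NA3 : ∀ y : A, A3 * y ∈ span {A1, A2} → y ∈ span {A1, A2})
    (Nr : ∀ y : A, r * y = 0 → y = 0)
    (Ns : ∀ y : A, s0 * y ∈ span {r} → y ∈ span {r})
    (hrJ : r ∈ span {A1 * B1 - B2 * A3, A2 * B2 - A1 * B3})
    (hsJ : s0 ∈ span {A1 * B1 - B2 * A3, A2 * B2 - A1 * B3})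
    (t : A) (ht : t * A1 ∈ span {A1 * B1 - B2 * A3, A2 * B2 - A1 * B3}) :
    t ∈ span {A1 * B1 - B2 * A3, A2 * B2 - A1 * B3, A3 * B3 - B1 * A2} := by
  obtain ⟨α, β, hab⟩ := Ideal.mem_span_pair.mp ht
  have hrel : (t * A2 + α * (A3 * B3 - B1 * A2)) * (A1 * B1 - B2 * A3)
      + (t * A3 + β * (A3 * B3 - B1 * A2)) * (A2 * B2 - A1 * B3) = 0 := by
    linear_combination (A3 * B3 - B1 * A2) * hab
  obtain ⟨s, hs2, hs3⟩ := HN_h1 Nr Ns hrJ hsJ _ _ hrel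
  have hwv1 : (t - α * B1 - s * B2 + β * B3) * (A1 * B1 - B2 * A3) = 0 := by
    linear_combination (-B1) * hab - B2 * hs3
  have hwv2 : (t - α * B1 - s * B2 + β * B3) * (A2 * B2 - A1 * B3) = 0 := by
    linear_combination B3 * hab + B2 * hs2
  obtain ⟨p, q, hr⟩ := Ideal.mem_span_pair.mp hrJ
  have hw : t = α * B1 + s * B2 - β * B3 := by
    have := Nr (t - α * B1 - s * B2 + β * B3)
      (by linear_combination p * hwv1 + q * hwv2 - (t - α * B1 - s * B2 + β * B3) * hr)
    linear_combination this
  have hz : s * A1 + (-β) * A2 + α * A3 = 0 := by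
    have := NB1 (s * A1 - β * A2 + α * A3) (by linear_combination hs3 - A3 * hw)
    linear_combination this
  obtain ⟨e, f, g, hef, hgf, hag⟩ := HN_koszul3 NA1 NA2 NA3 s (-β) α hz
  have hfin : t = e * (A1 * B1 - B2 * A3) - g * (A2 * B2 - A1 * B3)
      - f * (A3 * B3 - B1 * A2) := by
    linear_combination hw - B1 * hef - B3 * hgf - B2 * hag
  have m1 : A1 * B1 - B2 * A3 ∈ span {A1 * B1 - B2 * A3, A2 * B2 - A1 * B3, A3 * B3 - B1 * A2} :=
    Ideal.subset_span (by simp)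
  have m2 : A2 * B2 - A1 * B3 ∈ span {A1 * B1 - B2 * A3, A2 * B2 - A1 * B3, A3 * B3 - B1 * A2} :=
    Ideal.subset_span (by simp)
  have m3 : A3 * B3 - B1 * A2 ∈ span {A1 * B1 - B2 * A3, A2 * B2 - A1 * B3, A3 * B3 - B1 * A2} :=
    Ideal.subset_span (by simp)
  rw [hfin]
  exact sub_mem (sub_mem (Ideal.mul_mem_left _ e m1) (Ideal.mul_mem_left _ g m2))
    (Ideal.mul_mem_left _ f m3)

lemma HN_case2 {A1 A2 A3 B1 B2 B3 r s0 : A}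
    (NA1 : ∀ y : A, A1 * y = 0 → y = 0)
    (NB1 : ∀ y : A, B1 * y = 0 → y = 0)
    (NB2 : ∀ y : A, B2 * y ∈ span {B1} → y ∈ span {B1})
    (NB3 : ∀ y : A, B3 * y ∈ span {B1, B2} → y ∈ span {B1, B2})
    (Nr : ∀ y : A, r * y = 0 → y = 0)
    (Ns : ∀ y : A, s0 * y ∈ span {r} → y ∈ span {r})
    (hrJ : r ∈ span {A1 * B1 - B2 * A3, A2 * B2 - A1 * B3})
    (hsJ : s0 ∈ span {A1 * B1 - B2 * A3, A2 * B2 - A1 * B3})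
    (t : A) (ht : t * B2 ∈ span {A1 * B1 - B2 * A3, A2 * B2 - A1 * B3}) :
    t ∈ span {A1 * B1 - B2 * A3, A2 * B2 - A1 * B3, A3 * B3 - B1 * A2} := by
  obtain ⟨α, β, hab⟩ := Ideal.mem_span_pair.mp ht
  have hrel : (t * B3 + α * (A3 * B3 - B1 * A2)) * (A1 * B1 - B2 * A3)
      + (t * B1 + β * (A3 * B3 - B1 * A2)) * (A2 * B2 - A1 * B3) = 0 := by
    linear_combination (A3 * B3 - B1 * A2) * hab
  obtain ⟨s, hs2, hs3⟩ := HN_h1 Nr Ns hrJ hsJ _ _ hrel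
  have hwv1 : (t + α * A3 + s * A1 - β * A2) * (A1 * B1 - B2 * A3) = 0 := by
    linear_combination A3 * hab + A1 * hs3
  have hwv2 : (t + α * A3 + s * A1 - β * A2) * (A2 * B2 - A1 * B3) = 0 := by
    linear_combination (-A2) * hab - A1 * hs2
  obtain ⟨p, q, hr⟩ := Ideal.mem_span_pair.mp hrJ
  have hw : t = β * A2 - α * A3 - s * A1 := by
    have := Nr (t + α * A3 + s * A1 - β * A2)
      (by linear_combination p * hwv1 + q * hwv2 - (t + α * A3 + s * A1 - β * A2) * hr)
    linear_combination this
  have hz : (-α) * B1 + (-s) * B2 + β * B3 = 0 := by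
    have := NA1 (β * B3 - α * B1 - s * B2) (by linear_combination -hab - B2 * hw)
    linear_combination this
  obtain ⟨e, f, g, hef, hgf, hag⟩ := HN_koszul3 NB1 NB2 NB3 (-α) (-s) β hz
  have hfin : t = g * (A1 * B1 - B2 * A3) + f * (A2 * B2 - A1 * B3)
      - e * (A3 * B3 - B1 * A2) := by
    linear_combination hw - A2 * hef - A1 * hgf - A3 * hag
  have m1 : A1 * B1 - B2 * A3 ∈ span {A1 * B1 - B2 * A3, A2 * B2 - A1 * B3, A3 * B3 - B1 * A2} :=
    Ideal.subset_span (by simp)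
  have m2 : A2 * B2 - A1 * B3 ∈ span {A1 * B1 - B2 * A3, A2 * B2 - A1 * B3, A3 * B3 - B1 * A2} :=
    Ideal.subset_span (by simp)
  have m3 : A3 * B3 - B1 * A2 ∈ span {A1 * B1 - B2 * A3, A2 * B2 - A1 * B3, A3 * B3 - B1 * A2} :=
    Ideal.subset_span (by simp)
  rw [hfin]
  exact sub_mem (add_mem (Ideal.mul_mem_left _ g m1) (Ideal.mul_mem_left _ f m2))
    (Ideal.mul_mem_left _ e m3)

lemma HN_grade2 {J : Ideal A}
    (h : sSup {n : ℕ∞ | ∃ rs : List A, (∀ r ∈ rs, r ∈ J) ∧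
      RingTheory.Sequence.IsRegular A rs ∧ (rs.length : ℕ∞) = n} = 2) :
    ∃ r s0 : A, r ∈ J ∧ s0 ∈ J ∧ (∀ y : A, r * y = 0 → y = 0) ∧
      (∀ y : A, s0 * y ∈ span {r} → y ∈ span {r}) := by
  have hex : ∃ rs : List A, (∀ x ∈ rs, x ∈ J) ∧
      RingTheory.Sequence.IsRegular A rs ∧ 2 ≤ rs.length := by
    by_contra hc
    push_neg at hc
    have hle : sSup {n : ℕ∞ | ∃ rs : List A, (∀ r ∈ rs, r ∈ J) ∧
        RingTheory.Sequence.IsRegular A rs ∧ (rs.length : ℕ∞) = n} ≤ 1 := by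
      apply sSup_le
      rintro n ⟨rs, h1, h2, h3⟩
      have hlt := hc rs h1 h2
      rw [← h3]
      exact_mod_cast Nat.lt_succ_iff.mp hlt
    rw [h] at hle
    norm_num at hle
  obtain ⟨rs, hmem, hregs, hlen⟩ := hex
  match rs, hmem, hregs, hlen with
  | [], _, _, hlen => exact absurd hlen (by simp)
  | [r], _, _, hlen => exact absurd hlen (by simp)
  | r :: s0 :: rest, hmem, hregs, _ =>
    refine ⟨r, s0, hmem r (by simp), hmem s0 (by simp), ?_, ?_⟩
    · intro y hy
      have h0 := HN_reg_unpack (r :: s0 :: rest) hregs.toIsWeaklyRegular 0 (by simp) y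
        (by simpa using hy)
      simpa using h0
    · intro y hy
      have h0 := HN_reg_unpack (r :: s0 :: rest) hregs.toIsWeaklyRegular 1 (by simp) y
        (by simpa [Ideal.ofList_singleton] using hy)
      simpa [Ideal.ofList_singleton] using h0

end HNaux

/-- If `x1, x2, x3` is a regular sequence and `grade(v1, v2) = 2`, then
`I = (v1, v2) : x1^{a1} = (v1, v2) : x2^{b2} = (v1, v2) : (x1^{a1}, x2^{b2})`. -/
theorem stmt_4 {A : Type*} [CommRing A] [IsNoetherianRing A] (x1 x2 x3 : A)
    (a1 a2 a3 b1 b2 b3 c1 c2 c3 : ℕ)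
    (ha1 : 0 < a1) (ha2 : 0 < a2) (ha3 : 0 < a3)
    (hb1 : 0 < b1) (hb2 : 0 < b2) (hb3 : 0 < b3)
    (hc1 : c1 = a1 + b1) (hc2 : c2 = a2 + b2) (hc3 : c3 = a3 + b3)
    (hproper : Ideal.span {x1, x2, x3} ≠ ⊤)
    (hht : idealHeight (Ideal.span {x1, x2, x3}) = 3)
    (hreg : RingTheory.Sequence.IsRegular A [x1, x2, x3])
    (v1 v2 D : A)
    (hv1 : v1 = x1 ^ c1 - x2 ^ b2 * x3 ^ a3)
    (hv2 : v2 = x2 ^ c2 - x1 ^ a1 * x3 ^ b3)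
    (hD : D = x3 ^ c3 - x1 ^ b1 * x2 ^ a2)
    (hgrade : idealGrade (Ideal.span {v1, v2}) = 2)
    (I : Ideal A) (hI : I = Ideal.span {v1, v2, D}) :
    I = (Ideal.span {v1, v2}).colon (Ideal.span {x1 ^ a1}) ∧
    I = (Ideal.span {v1, v2}).colon (Ideal.span {x2 ^ b2}) ∧
    I = (Ideal.span {v1, v2}).colon (Ideal.span {x1 ^ a1, x2 ^ b2}) := by
  subst hc1 hc2 hc3
  rw [pow_add] at hv1 hv2 hD
  subst hv1 hv2 hD hI
  -- base regularity facts
  have N1 : ∀ y : A, x1 * y = 0 → y = 0 := by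
    intro y hy
    have h0 := HN_reg_unpack [x1, x2, x3] hreg.toIsWeaklyRegular 0 (by simp) y
      (by simpa using hy)
    simpa using h0
  have N2 : ∀ y : A, x2 * y ∈ span {x1} → y ∈ span {x1} := by
    intro y hy
    have h0 := HN_reg_unpack [x1, x2, x3] hreg.toIsWeaklyRegular 1 (by simp) y
      (by simpa [Ideal.ofList_singleton] using hy)
    simpa [Ideal.ofList_singleton] using h0
  have hol : Ideal.ofList [x1, x2] = span {x1, x2} := by
    have : {r : A | r ∈ [x1, x2]} = {x1, x2} := by ext z; simp
    simp only [Ideal.ofList, this]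
  have N3 : ∀ y : A, x3 * y ∈ span {x1, x2} → y ∈ span {x1, x2} := by
    intro y hy
    have h0 := HN_reg_unpack [x1, x2, x3] hreg.toIsWeaklyRegular 2 (by simp) y ?_
    · rw [show List.take 2 [x1, x2, x3] = [x1, x2] from rfl, hol] at h0
      exact h0
    · rw [show List.take 2 [x1, x2, x3] = [x1, x2] from rfl, hol]
      simpa using hy
  -- powered regularity
  have PA1 : ∀ y : A, x1 ^ a1 * y = 0 → y = 0 := HN_pow_nzd N1 a1
  have PB1 : ∀ y : A, x1 ^ b1 * y = 0 → y = 0 := HN_pow_nzd N1 b1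
  have PA2 := HN_reg2_pow N1 N2 a1 a2
  have PA3 := HN_reg3_pow N1 N2 N3 a1 a2 a3
  have PB2 := HN_reg2_pow N1 N2 b1 b2
  have PB3 := HN_reg3_pow N1 N2 N3 b1 b2 b3
  -- regular pair in (v1, v2)
  simp only [idealGrade] at hgrade
  obtain ⟨r, s0, hrJ, hsJ, Nr, Ns⟩ := HN_grade2 hgrade
  -- first equality
  have key1 : span {x1 ^ a1 * x1 ^ b1 - x2 ^ b2 * x3 ^ a3,
      x2 ^ a2 * x2 ^ b2 - x1 ^ a1 * x3 ^ b3, x3 ^ a3 * x3 ^ b3 - x1 ^ b1 * x2 ^ a2} =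
      (span {x1 ^ a1 * x1 ^ b1 - x2 ^ b2 * x3 ^ a3,
        x2 ^ a2 * x2 ^ b2 - x1 ^ a1 * x3 ^ b3}).colon (span {x1 ^ a1}) := by
    apply le_antisymm
    · rw [Ideal.span_le]
      rintro g hg
      simp only [Set.mem_insert_iff, Set.mem_singleton_iff] at hg
      rcases hg with rfl | rfl | rfl
      · rw [SetLike.mem_coe, Ideal.mem_colon_span_singleton]
        exact Ideal.mem_span_pair.mpr ⟨x1 ^ a1, 0, by ring⟩
      · rw [SetLike.mem_coe, Ideal.mem_colon_span_singleton]
        exact Ideal.mem_span_pair.mpr ⟨0, x1 ^ a1, by ring⟩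
      · rw [SetLike.mem_coe, Ideal.mem_colon_span_singleton]
        exact Ideal.mem_span_pair.mpr ⟨-(x2 ^ a2), -(x3 ^ a3), by ring⟩
    · intro t ht
      rw [Ideal.mem_colon_span_singleton] at ht
      exact HN_case1 PA1 PB1 PA2 PA3 Nr Ns hrJ hsJ t ht
  have key2 : span {x1 ^ a1 * x1 ^ b1 - x2 ^ b2 * x3 ^ a3,
      x2 ^ a2 * x2 ^ b2 - x1 ^ a1 * x3 ^ b3, x3 ^ a3 * x3 ^ b3 - x1 ^ b1 * x2 ^ a2} =
      (span {x1 ^ a1 * x1 ^ b1 - x2 ^ b2 * x3 ^ a3,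
        x2 ^ a2 * x2 ^ b2 - x1 ^ a1 * x3 ^ b3}).colon (span {x2 ^ b2}) := by
    apply le_antisymm
    · rw [Ideal.span_le]
      rintro g hg
      simp only [Set.mem_insert_iff, Set.mem_singleton_iff] at hg
      rcases hg with rfl | rfl | rfl
      · rw [SetLike.mem_coe, Ideal.mem_colon_span_singleton]
        exact Ideal.mem_span_pair.mpr ⟨x2 ^ b2, 0, by ring⟩
      · rw [SetLike.mem_coe, Ideal.mem_colon_span_singleton]
        exact Ideal.mem_span_pair.mpr ⟨0, x2 ^ b2, by ring⟩
      · rw [SetLike.mem_coe, Ideal.mem_colon_span_singleton]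
        exact Ideal.mem_span_pair.mpr ⟨-(x3 ^ b3), -(x1 ^ b1), by ring⟩
    · intro t ht
      rw [Ideal.mem_colon_span_singleton] at ht
      exact HN_case2 PA1 PB1 PB2 PB3 Nr Ns hrJ hsJ t ht
  refine ⟨key1, key2, ?_⟩
  apply le_antisymm
  · intro t htI
    rw [Submodule.mem_colon]
    intro p hp
    induction hp using Submodule.span_induction with
    | mem z hz =>
      simp only [Set.mem_insert_iff, Set.mem_singleton_iff] at hz
      rcases hz with rfl | rfl
      · rw [smul_eq_mul]
        exact Ideal.mem_colon_span_singleton.mp (key1 ▸ htI)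
      · rw [smul_eq_mul]
        exact Ideal.mem_colon_span_singleton.mp (key2 ▸ htI)
    | zero => simp
    | add y z _ _ ihy ihz => rw [smul_add]; exact add_mem ihy ihz
    | smul a z _ ihz =>
      have h' : t • (a • z) = a * (t * z) := by simp only [smul_eq_mul]; ring
      rw [h']
      exact Ideal.mul_mem_left _ a ihz
  · rw [key1]
    exact Submodule.colon_mono le_rfl (Ideal.span_mono (by simp))
end

section
/- Any integer solution (m1, m2, m3) ∈ ℕ^3 of the system c1·m1 = b2·m2 + a3·m3, c2·m2 = a1·m1 + b3·m3, c3·m3 = b1·m1 + a2·m2 is a positive rational multiple of (c2·c3 − a2·b3, c1·c3 − a3·b1, c1·c2 − a1·b2); i.e., the rational solution space of this system has dimension 1 and is spanned by this vector. -/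
/-- Any solution `(m1, m2, m3) ∈ ℕ^3` (with positive entries) of the system
`c1·m1 = b2·m2 + a3·m3`, `c2·m2 = a1·m1 + b3·m3`, `c3·m3 = b1·m1 + a2·m2`
is a positive rational multiple of
`(c2·c3 − a2·b3, c1·c3 − a3·b1, c1·c2 − a1·b2)`. -/
theorem stmt_7 (a1 a2 a3 b1 b2 b3 c1 c2 c3 : ℕ)
    (ha1 : 0 < a1) (ha2 : 0 < a2) (ha3 : 0 < a3)
    (hb1 : 0 < b1) (hb2 : 0 < b2) (hb3 : 0 < b3)
    (hc1 : c1 = a1 + b1) (hc2 : c2 = a2 + b2) (hc3 : c3 = a3 + b3)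
    (m1 m2 m3 : ℕ) (hm1 : 0 < m1) (hm2 : 0 < m2) (hm3 : 0 < m3)
    (he1 : c1 * m1 = b2 * m2 + a3 * m3)
    (he2 : c2 * m2 = a1 * m1 + b3 * m3)
    (he3 : c3 * m3 = b1 * m1 + a2 * m2) :
    ∃ q : ℚ, 0 < q ∧
      (m1 : ℚ) = q * ((c2 * c3 : ℚ) - a2 * b3) ∧
      (m2 : ℚ) = q * ((c1 * c3 : ℚ) - a3 * b1) ∧
      (m3 : ℚ) = q * ((c1 * c2 : ℚ) - a1 * b2) := by
  subst hc1 hc2 hc3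
  have A1 : (0:ℚ) < a1 := by exact_mod_cast ha1
  have A2 : (0:ℚ) < a2 := by exact_mod_cast ha2
  have A3 : (0:ℚ) < a3 := by exact_mod_cast ha3
  have B1 : (0:ℚ) < b1 := by exact_mod_cast hb1
  have B2 : (0:ℚ) < b2 := by exact_mod_cast hb2
  have B3 : (0:ℚ) < b3 := by exact_mod_cast hb3
  have M3 : (0:ℚ) < m3 := by exact_mod_cast hm3
  have E1 : ((a1+b1) * m1 : ℚ) = b2 * m2 + a3 * m3 := by exact_mod_cast he1
  have E2 : ((a2+b2) * m2 : ℚ) = a1 * m1 + b3 * m3 := by exact_mod_cast he2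
  have hD3 : (0:ℚ) < ((a1+b1) * (a2+b2) : ℚ) - a1*b2 := by push_cast; nlinarith
  refine ⟨(m3:ℚ) / (((a1+b1) * (a2+b2) : ℚ) - a1*b2), div_pos M3 hD3, ?_, ?_, ?_⟩
  · rw [div_mul_eq_mul_div, eq_div_iff (ne_of_gt hD3)]
    push_cast
    linear_combination ((a2:ℚ)+b2)*E1 + (b2:ℚ)*E2
  · rw [div_mul_eq_mul_div, eq_div_iff (ne_of_gt hD3)]
    push_cast
    linear_combination ((a1:ℚ)+b1)*E2 + (a1:ℚ)*E1
  · rw [div_mul_eq_mul_div, eq_div_iff (ne_of_gt hD3)]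
    push_cast
    ring
end

section
/- In k[x1,x2,x3], the pair v1, v2 is a regular sequence (in either order), where v1 = x1^{c1} − x2^{b2}·x3^{a3} and v2 = x2^{c2} − x1^{a1}·x3^{b3}. -/
/-!
Both polynomials vanish at the origin, so they generate a proper ideal, and in the factorial ring
`k[x₁, x₂, x₃]` a pair `f, g` with `f ≠ 0` spanning a proper ideal is a regular sequence as soon
as `f` and `g` are coprime. For coprimality, let `d` divide both. Setting `x₃ = 0` turns them
into `x₁ ^ c₁` and `x₂ ^ c₂`, whose only common divisors are units, so `d(0) ≠ 0`. On the other
hand `v₁` is homogeneous for the positive weights `(b₂ + a₃, c₁, c₁)`, so its divisors are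
weighted homogeneous too; one with nonzero constant term must then be a nonzero constant.
-/

open MvPolynomial Pointwise

theorem RingTheory.Sequence.IsRegular.pair_of_isRelPrime {A : Type*} [CommRing A] [IsDomain A]
    [DecompositionMonoid A] {f g : A} (hf : f ≠ 0) (hfg : IsRelPrime f g)
    (hI : Ideal.span {f, g} ≠ ⊤) : IsRegular A [f, g] := by
  have smul_top (r : A) : r • (⊤ : Submodule A A) = Ideal.span {r} := by
    rw [← Submodule.ideal_span_singleton_smul, smul_eq_mul, Ideal.mul_top]
  have hofList : Ideal.ofList [f, g] = Ideal.span {f, g} := by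
    simp [Ideal.ofList, Set.insert_def]
  rw [isRegular_iff]
  refine ⟨.cons ?_ (.cons ?_ (.nil _ _)), ?_⟩
  · exact (IsRegular.of_ne_zero hf).left.isSMulRegular
  · rw [isSMulRegular_quotient_iff_mem_of_smul_mem, smul_top]
    intro x hx
    rw [Ideal.mem_span_singleton] at hx ⊢
    exact hfg.dvd_of_dvd_mul_left hx
  · rwa [smul_eq_mul, Ideal.mul_top, hofList, ne_comm]

namespace MvPolynomial

variable {σ R : Type*} [CommRing R]

/-- Substitutes `X i * t ^ w i` for `X i`, `t` being a new variable. -/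
noncomputable def weightScaling (w : σ → ℕ) :
    MvPolynomial σ R →ₐ[R] Polynomial (MvPolynomial σ R) :=
  aeval fun i => Polynomial.C (X i) * Polynomial.X ^ w i

theorem IsWeightedHomogeneous.weightScaling_eq {w : σ → ℕ} {f : MvPolynomial σ R} {n : ℕ}
    (hf : IsWeightedHomogeneous w f n) :
    weightScaling w f = Polynomial.C f * Polynomial.X ^ n := by
  induction hf using IsWeightedHomogeneous.induction_on with
  | zero => simp
  | add p q _ _ hp hq => rw [map_add, hp, hq, map_add, add_mul]
  | monomial d r hd =>
    subst hd
    rw [weightScaling, aeval_monomial, monomial_eq, Finsupp.weight_apply]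
    simp only [Finsupp.prod, mul_pow, Finset.prod_mul_distrib, ← pow_mul,
      Finset.prod_pow_eq_pow_sum, Finsupp.sum, map_mul, map_prod, map_pow,
      Polynomial.algebraMap_apply, algebraMap_eq]
    simp only [smul_eq_mul, mul_comm (d _), mul_assoc]

theorem eval_zero_weightScaling {w : σ → ℕ} (hw : ∀ i, w i ≠ 0) (p : MvPolynomial σ R) :
    (weightScaling w p).eval 0 = C (constantCoeff p) := by
  induction p using MvPolynomial.induction_on with
  | C a => simp [weightScaling]
  | add p q hp hq => simp [hp, hq]
  | mul_X p i hp => simp [weightScaling, hw i]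

theorem eval_one_weightScaling (w : σ → ℕ) (p : MvPolynomial σ R) :
    (weightScaling w p).eval 1 = p := by
  induction p using MvPolynomial.induction_on with
  | C a => simp [weightScaling]
  | add p q hp hq => simp [hp, hq]
  | mul_X p i hp => simp_all [weightScaling]

/- Under `weightScaling`, `d * r = f` becomes a factorisation of the monomial `C f * t ^ n`, so
the trailing and leading degrees in `t` of the image of `d` agree; the former is `0` because
`d` has a nonzero constant term. -/
theorem eq_C_constantCoeff_of_dvd_isWeightedHomogeneous [IsDomain R] {w : σ → ℕ}
    (hw : ∀ i, w i ≠ 0) {f d : MvPolynomial σ R} {n : ℕ} (hf : IsWeightedHomogeneous w f n)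
    (hf0 : f ≠ 0) (hdf : d ∣ f) (hd : constantCoeff d ≠ 0) : d = C (constantCoeff d) := by
  obtain ⟨r, rfl⟩ := hdf
  set P := weightScaling w d
  set Q := weightScaling w r
  have hPQ : P * Q = Polynomial.C (d * r) * Polynomial.X ^ n := by
    rw [← map_mul, hf.weightScaling_eq]
  have hPeval : P.eval 0 = C (constantCoeff d) := eval_zero_weightScaling hw d
  have hP0 : P ≠ 0 := fun h => hd (by simpa [h] using hPeval.symm)
  have hQ0 : Q ≠ 0 := fun h => hf0 (by simpa [h] using hPQ.symm)
  have hdeg := Polynomial.natDegree_mul hP0 hQ0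
  have htrail := Polynomial.natTrailingDegree_mul hP0 hQ0
  rw [hPQ, Polynomial.natDegree_C_mul_X_pow n _ hf0] at hdeg
  rw [hPQ, Polynomial.natTrailingDegree_mul_X_pow (Polynomial.C_ne_zero.mpr hf0),
    Polynomial.natTrailingDegree_C] at htrail
  have hPtrail : P.natTrailingDegree = 0 := by
    rw [Polynomial.natTrailingDegree_eq_zero, Polynomial.coeff_zero_eq_eval_zero, hPeval]
    exact .inr (by rwa [Ne, C_eq_zero])
  have hPdeg : P.natDegree = 0 := by
    have := Polynomial.natTrailingDegree_le_natDegree P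
    have := Polynomial.natTrailingDegree_le_natDegree Q
    omega
  calc d = P.eval 1 := (eval_one_weightScaling w d).symm
    _ = C (constantCoeff d) := by
      rw [Polynomial.eq_C_of_natDegree_eq_zero hPdeg, Polynomial.eval_C,
        Polynomial.coeff_zero_eq_eval_zero, hPeval]

theorem constantCoeff_aeval {τ : Type*} {g : σ → MvPolynomial τ R}
    (hg : ∀ i, constantCoeff (g i) = 0) (p : MvPolynomial σ R) :
    constantCoeff (aeval g p) = constantCoeff p := by
  induction p using MvPolynomial.induction_on with
  | C a => simp
  | add p q hp hq => rw [map_add, map_add, map_add, hp, hq]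
  | mul_X p i hp => simp [hg i]

theorem isUnit_of_dvd_X_pow_of_dvd_X_pow [IsDomain R] {i j : σ} (hij : i ≠ j)
    {d : MvPolynomial σ R} {m n : ℕ} (hi : d ∣ X i ^ m) (hj : d ∣ X j ^ n) : IsUnit d := by
  obtain ⟨_ | k, -, hk⟩ := (dvd_prime_pow X_prime m).mp hi
  · simpa using hk
  · have hXi : X i ∣ X j ^ n := (dvd_pow_self _ k.succ_ne_zero).trans (hk.symm.dvd.trans hj)
    exact absurd (X_dvd_X.mp (X_prime.dvd_of_dvd_pow hXi)) hij

theorem X_pow_sub_X_pow_mul_X_pow_ne_zero [Nontrivial R] {i j l : σ} (hli : l ≠ i) {p q r : ℕ}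
    (hr : r ≠ 0) : X i ^ p - X j ^ q * X l ^ r ≠ (0 : MvPolynomial σ R) := by
  classical
  intro h
  simpa [hli, hr] using congrArg (eval (Pi.single i 1)) h

theorem isWeightedHomogeneous_X_pow_sub_X_pow_mul_X_pow {w : σ → ℕ} {i j l : σ} {p q r : ℕ}
    (hw : q * w j + r * w l = p * w i) :
    IsWeightedHomogeneous w (X i ^ p - X j ^ q * X l ^ r : MvPolynomial σ R) (p * w i) := by
  have hX := isWeightedHomogeneous_X R w
  have h := ((hX j).pow q).mul ((hX l).pow r)
  simp only [smul_eq_mul, hw] at h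
  exact ((hX i).pow p).sub h

theorem isRelPrime_X_pow_sub_X_pow_mul_X_pow {k : Type*} [Field k] {p q r s t u : ℕ}
    (hp : p ≠ 0) (hr : r ≠ 0) (hu : u ≠ 0) :
    IsRelPrime (X 0 ^ p - X 1 ^ q * X 2 ^ r : MvPolynomial (Fin 3) k)
      (X 1 ^ s - X 0 ^ t * X 2 ^ u) := by
  intro d h₁ h₂
  set g : Fin 3 → MvPolynomial (Fin 3) k := ![X 0, X 1, 0]
  have hconst : constantCoeff d ≠ 0 := by
    have hdvd₁ : aeval g d ∣ X 0 ^ p := by simpa [g, hr] using map_dvd (aeval g) h₁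
    have hdvd₂ : aeval g d ∣ X 1 ^ s := by simpa [g, hu] using map_dvd (aeval g) h₂
    have hunit := isUnit_of_dvd_X_pow_of_dvd_X_pow (by decide) hdvd₁ hdvd₂
    rw [← constantCoeff_aeval (g := g) (by intro i; fin_cases i <;> simp [g])]
    exact (hunit.map constantCoeff).ne_zero
  have hhom : IsWeightedHomogeneous ![q + r, p, p]
      (X 0 ^ p - X 1 ^ q * X 2 ^ r : MvPolynomial (Fin 3) k) _ :=
    isWeightedHomogeneous_X_pow_sub_X_pow_mul_X_pow (by simp; ring)
  have hd := eq_C_constantCoeff_of_dvd_isWeightedHomogeneous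
    (by intro i; fin_cases i <;> simp [hp, hr]) hhom
    (X_pow_sub_X_pow_mul_X_pow_ne_zero (by decide) hr) h₁ hconst
  rw [hd]
  exact (isUnit_iff_ne_zero.mpr hconst).map C

end MvPolynomial

theorem stmt_8_general {k : Type*} [Field k]
    (a1 a2 a3 b1 b2 b3 c1 c2 : ℕ)
    (ha1 : 0 < a1) (ha2 : 0 < a2) (ha3 : 0 < a3)
    (hb3 : 0 < b3)
    (hc1 : c1 = a1 + b1) (hc2 : c2 = a2 + b2)
    (v1 v2 : MvPolynomial (Fin 3) k)
    (hv1 : v1 = X 0 ^ c1 - X 1 ^ b2 * X 2 ^ a3)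
    (hv2 : v2 = X 1 ^ c2 - X 0 ^ a1 * X 2 ^ b3) :
    RingTheory.Sequence.IsRegular (MvPolynomial (Fin 3) k) [v1, v2] ∧
    RingTheory.Sequence.IsRegular (MvPolynomial (Fin 3) k) [v2, v1] := by
  have hc1₀ : c1 ≠ 0 := by omega
  have hc2₀ : c2 ≠ 0 := by omega
  have hrel : IsRelPrime v1 v2 :=
    hv1 ▸ hv2 ▸ isRelPrime_X_pow_sub_X_pow_mul_X_pow hc1₀ ha3.ne' hb3.ne'
  have hv1₀ : v1 ≠ 0 := hv1 ▸ X_pow_sub_X_pow_mul_X_pow_ne_zero (by decide) ha3.ne'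
  have hv2₀ : v2 ≠ 0 := hv2 ▸ X_pow_sub_X_pow_mul_X_pow_ne_zero (by decide) hb3.ne'
  have hker : Ideal.span {v1, v2} ≤ RingHom.ker (constantCoeff (R := k) (σ := Fin 3)) := by
    rw [Ideal.span_le, Set.insert_subset_iff, Set.singleton_subset_iff]
    constructor <;> simp [hv1, hv2, hc1₀, hc2₀, ha3.ne', hb3.ne']
  have hI : Ideal.span {v1, v2} ≠ ⊤ := ne_top_of_le_ne_top (RingHom.ker_ne_top _) hker
  exact ⟨.pair_of_isRelPrime hv1₀ hrel hI,
    .pair_of_isRelPrime hv2₀ hrel.symm (Set.pair_comm v1 v2 ▸ hI)⟩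

/-- In `k[x1,x2,x3]`, the pair `v1, v2` is a regular sequence in either order. -/
theorem stmt_8 {k : Type*} [Field k]
    (a1 a2 a3 b1 b2 b3 c1 c2 c3 : ℕ)
    (ha1 : 0 < a1) (ha2 : 0 < a2) (ha3 : 0 < a3)
    (hb1 : 0 < b1) (hb2 : 0 < b2) (hb3 : 0 < b3)
    (hc1 : c1 = a1 + b1) (hc2 : c2 = a2 + b2) (hc3 : c3 = a3 + b3)
    (v1 v2 : MvPolynomial (Fin 3) k)
    (hv1 : v1 = X 0 ^ c1 - X 1 ^ b2 * X 2 ^ a3)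
    (hv2 : v2 = X 1 ^ c2 - X 0 ^ a1 * X 2 ^ b3) :
    RingTheory.Sequence.IsRegular (MvPolynomial (Fin 3) k) [v1, v2] ∧
    RingTheory.Sequence.IsRegular (MvPolynomial (Fin 3) k) [v2, v1] :=
  stmt_8_general a1 a2 a3 b1 b2 b3 c1 c2 ha1 ha2 ha3 hb3 hc1 hc2 v1 v2 hv1 hv2
end

section
/- Let x1, x2 be elements of the Jacobson radical of a Noetherian ring A. Then x1, x2 is a regular sequence if and only if v1, x2 is a regular sequence, where v1 = x1^{c1} − x2^{b2}·x3^{a3} with c1, b2, a3 ≥ 1 and x3 ∈ A arbitrary. -/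
/-- For `x1, x2, x3` in the Jacobson radical of a Noetherian ring `A`,
`x1, x2` is a regular sequence iff `v1, x2` is, where
`v1 = x1^{c1} − x2^{b2}·x3^{a3}` with `c1, b2, a3 ≥ 1`. -/
theorem stmt_9 {A : Type*} [CommRing A] [IsNoetherianRing A] (x1 x2 x3 : A)
    (hx1 : x1 ∈ (⊥ : Ideal A).jacobson) (hx2 : x2 ∈ (⊥ : Ideal A).jacobson)
    (hx3 : x3 ∈ (⊥ : Ideal A).jacobson)
    (c1 b2 a3 : ℕ) (hc1 : 1 ≤ c1) (hb2 : 1 ≤ b2) (ha3 : 1 ≤ a3)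
    (v1 : A) (hv1 : v1 = x1 ^ c1 - x2 ^ b2 * x3 ^ a3) :
    RingTheory.Sequence.IsRegular A [x1, x2] ↔
      RingTheory.Sequence.IsRegular A [v1, x2] := by
  classical
  rcases subsingleton_or_nontrivial A with h | h
  · constructor <;> intro hr <;>
      exact absurd (Subsingleton.elim _ _) hr.top_ne_smul
  have hann : Module.annihilator A A = ⊥ := by
    refine le_antisymm (fun r hr => ?_) bot_le
    simpa using Module.mem_annihilator.mp hr 1
  have hv1mem : v1 ∈ (⊥ : Ideal A).jacobson := by
    rw [hv1]
    exact sub_mem (Ideal.pow_mem_of_mem _ hx1 _ hc1)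
      (Ideal.mul_mem_right _ _ (Ideal.pow_mem_of_mem _ hx2 _ hb2))
  have hx1c : x1 ^ c1 ∈ (⊥ : Ideal A).jacobson := Ideal.pow_mem_of_mem _ hx1 _ hc1
  -- reduce to weak regularity
  rw [RingTheory.Sequence.isRegular_iff_isWeaklyRegular_of_subset_jacobson_annihilator
    (rs := [x1, x2]) (by rw [hann]; rintro r hr; simp at hr; rcases hr with rfl | rfl <;> assumption),
    RingTheory.Sequence.isRegular_iff_isWeaklyRegular_of_subset_jacobson_annihilator
    (rs := [v1, x2]) (by rw [hann]; rintro r hr; simp at hr; rcases hr with rfl | rfl <;> assumption)]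
  -- swap, using permutation invariance
  have swap : ∀ a : A, a ∈ (⊥ : Ideal A).jacobson →
      (RingTheory.Sequence.IsWeaklyRegular A [a, x2] ↔
        RingTheory.Sequence.IsWeaklyRegular A [x2, a]) := by
    intro a ha
    constructor
    · intro hr
      exact hr.of_perm_of_subset_jacobson_annihilator (List.Perm.swap _ _ _)
        (by rw [hann]; rintro r hr; simp at hr; rcases hr with rfl | rfl <;> assumption)
    · intro hr
      exact hr.of_perm_of_subset_jacobson_annihilator (List.Perm.swap _ _ _)
        (by rw [hann]; rintro r hr; simp at hr; rcases hr with rfl | rfl <;> assumption)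
  rw [swap x1 hx1, swap v1 hv1mem]
  rw [RingTheory.Sequence.isWeaklyRegular_cons_iff' (M := A) x2 [x1],
    RingTheory.Sequence.isWeaklyRegular_cons_iff' (M := A) x2 [v1]]
  have hmk : Ideal.Quotient.mk (Ideal.span {x2}) v1 =
      (Ideal.Quotient.mk (Ideal.span {x2}) x1) ^ c1 := by
    have h2 : x2 ^ b2 * x3 ^ a3 ∈ Ideal.span {x2} :=
      Ideal.mul_mem_right _ _ (Ideal.pow_mem_of_mem _
        (Ideal.mem_span_singleton_self x2) _ hb2)
    have : (Ideal.Quotient.mk (Ideal.span {x2})) (x2 ^ b2 * x3 ^ a3) = 0 :=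
      Ideal.Quotient.eq_zero_iff_mem.mpr h2
    rw [hv1, map_sub, map_pow, this, sub_zero]
  simp only [List.map_cons, List.map_nil, hmk,
    RingTheory.Sequence.isWeaklyRegular_singleton_iff]
  exact and_congr_right fun _ =>
    (IsSMulRegular.pow_iff (lt_of_lt_of_le Nat.zero_lt_one hc1)).symm
end

section
/- The Herzog ideal 𝔭_n is a prime ideal of height 2 in k[x1,x2,x3], and the quotient A/𝔭_n is a one-dimensional domain. -/
/-- The Herzog ideal associated to `n ∈ ℕ^3`: the kernel of the `k`-algebra map
`k[x1,x2,x3] → k[t]` sending `xᵢ` to `t^{nᵢ}`. -/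
noncomputable def herzogIdeal (k : Type*) [Field k] (n : Fin 3 → ℕ) :
    Ideal (MvPolynomial (Fin 3) k) :=
  RingHom.ker (MvPolynomial.aeval (fun i => (Polynomial.X : Polynomial k) ^ n i)).toRingHom

/-!
The map `A → k[t]` makes `k[t]` integral over `A/𝔭_n` (`t` is a root of `T^{n₁} - x₁`), so
`A/𝔭_n`, like `k[t]`, is a domain in which every nonzero prime is maximal and which is not a field:
its dimension is `1`. Hence `𝔭_n` is not maximal, and `ht 𝔭_n + 1 ≤ dim A = 3`. Conversely `𝔭_n`
contains the coprime binomials `x₂^{n₃} - x₃^{n₂}` and `x₁^{n₂} - x₂^{n₁}`, while a height-one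
prime of the UFD `A` is principal; so `ht 𝔭_n ≥ 2`.
-/

open Polynomial

lemma idealHeight_eq_height {A : Type*} [CommRing A] (J : Ideal A) :
    idealHeight J = J.height := by
  rw [idealHeight]
  apply le_antisymm
  · rw [J.height_eq_inf_minimalPrimes]
    refine le_iInf₂ fun p hp ↦ ?_
    have := hp.1.1
    refine (iInf_le _ ⟨⟨p, this⟩, hp.1.2⟩).trans ?_
    rw [← PrimeSpectrum.height_eq_orderHeight]
  · refine le_iInf fun p ↦ ?_
    rw [← PrimeSpectrum.height_eq_orderHeight]
    exact Ideal.height_mono p.2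

namespace Ideal

variable {R : Type*} [CommRing R]

lemma height_add_one_le_ringKrullDim_of_not_isMaximal {p : Ideal R} [p.IsPrime]
    (hp : ¬p.IsMaximal) : ((p.height + 1 : ℕ∞) : WithBot ℕ∞) ≤ ringKrullDim R := by
  obtain ⟨m, hm, hpm⟩ := exists_le_maximal p IsPrime.ne_top'
  have hlt : p < m := lt_of_le_of_ne hpm fun h ↦ hp (h ▸ hm)
  exact (WithBot.coe_le_coe.mpr (height_add_one_le_of_lt_of_isPrime hlt)).trans
    height_le_ringKrullDim_of_isPrime

lemma two_le_height_of_isRelPrime [IsDomain R] [UniqueFactorizationMonoid R] {P : Ideal R}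
    [hP : P.IsPrime] {a b : R} (ha : a ∈ P) (hb : b ∈ P) (hab : IsRelPrime a b) :
    2 ≤ P.height := by
  have hP0 : P ≠ ⊥ := by
    rintro rfl
    rw [mem_bot] at ha hb
    subst ha hb
    exact not_isUnit_zero (isRelPrime_zero_left.mp hab)
  obtain ⟨q, hqP, hq⟩ := hP.exists_mem_prime_of_ne_bot hP0
  have h0 : P.height ≠ 0 := by rwa [Ne, height_eq_zero_iff_eq_bot]
  have h1 : P.height ≠ 1 := fun h ↦ by
    have hPq := eq_span_singleton_of_height_eq_one h hqP hq
    rw [hPq, mem_span_singleton] at ha hb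
    exact hq.not_isUnit (hab ha hb)
  generalize P.height = h at h0 h1
  induction h using ENat.recTopCoe with
  | top => exact le_top
  | coe h => norm_cast at h0 h1 ⊢; omega

end Ideal

lemma Polynomial.isRelPrime_C_of_monic {R : Type*} [CommRing R] [NoZeroDivisors R] {a : R}
    (ha : a ≠ 0) {f : R[X]} (hf : f.Monic) : IsRelPrime (C a) f := by
  intro d hda hdf
  have hd : d = C (d.coeff 0) := eq_C_of_natDegree_eq_zero <| Nat.le_zero.mp <|
    (natDegree_le_of_dvd hda (C_ne_zero.mpr ha)).trans_eq (natDegree_C a)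
  rw [hd] at hdf ⊢
  have := (C_dvd_iff_dvd_coeff _ _).mp hdf f.natDegree
  rw [hf.coeff_natDegree] at this
  exact isUnit_C.mpr (isUnit_of_dvd_one this)

lemma MvPolynomial.isRelPrime_X_pow_sub_X_pow (R : Type*) [CommRing R] [IsDomain R]
    {a b c d : ℕ} (ha : 0 < a) (hc : 0 < c) :
    IsRelPrime (X 1 ^ a - X 2 ^ b : MvPolynomial (Fin 3) R) (X 0 ^ c - X 1 ^ d) := by
  set E := finSuccEquiv R 2
  have e0 : E (X 0) = Polynomial.X := finSuccEquiv_X_zero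
  have e1 : E (X 1) = Polynomial.C (X 0) := finSuccEquiv_X_succ (j := 0)
  have e2 : E (X 2) = Polynomial.C (X 1) := finSuccEquiv_X_succ (j := 1)
  have h1 : E (X 1 ^ a - X 2 ^ b) = Polynomial.C (X 0 ^ a - X 1 ^ b) := by simp [e1, e2]
  have h2 : E (X 0 ^ c - X 1 ^ d) = Polynomial.X ^ c - Polynomial.C (X 0 ^ d) := by
    simp [e0, e1]
  have hne : (X 0 ^ a - X 1 ^ b : MvPolynomial (Fin 2) R) ≠ 0 := fun h ↦ by
    simpa [ha.ne'] using congrArg (eval ![0, 1]) h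
  intro q hq1 hq2
  have := isRelPrime_C_of_monic hne (monic_X_pow_sub_C _ hc.ne')
    (h1 ▸ map_dvd E hq1) (h2 ▸ map_dvd E hq2)
  exact (isUnit_map_iff E q).mp this

lemma Polynomial.isIntegral_of_isIntegralElem_X {A R : Type*} [CommRing A] [CommRing R]
    (φ : A →+* R[X]) (hC : ∀ a, C a ∈ φ.range) (hX : φ.IsIntegralElem X) : φ.IsIntegral := by
  intro f
  induction f using Polynomial.induction_on with
  | C a => obtain ⟨b, hb⟩ := hC a; exact hb ▸ φ.isIntegralElem_map
  | add f g hf hg => exact hf.add φ hg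
  | monomial m a ih => rw [pow_succ, ← mul_assoc]; exact ih.mul φ hX

theorem Ring.DimensionLEOne.of_isIntegral_of_injective {R S : Type*} [CommRing R] [CommRing S]
    [Algebra R S] [Algebra.IsIntegral R S] [Ring.DimensionLEOne S]
    (h : Function.Injective (algebraMap R S)) : Ring.DimensionLEOne R where
  maximalOfPrime {p} hp0 hp := by
    have hbot : (⊥ : Ideal S).comap (algebraMap R S) = ⊥ := Ideal.comap_bot_of_injective _ h
    obtain ⟨Q, -, hQ, rfl⟩ := Ideal.exists_ideal_over_prime_of_isIntegral p ⊥ (hbot ▸ bot_le)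
    have hQ0 : Q ≠ ⊥ := by rintro rfl; exact hp0 hbot
    have := hQ.isMaximal hQ0
    exact Ideal.isMaximal_comap_of_isIntegral_of_isMaximal Q

theorem Ring.DimensionLEOne.ringKrullDim_eq_one {R : Type*} [CommRing R] [IsDomain R]
    [Ring.DimensionLEOne R] (h : ¬IsField R) : ringKrullDim R = 1 := by
  have hle : ringKrullDim R ≤ (1 : ℕ) := Ring.krullDimLE_iff.mp inferInstance
  refine le_antisymm hle (not_lt.mp fun hlt ↦ h ?_)
  have : Ring.KrullDimLE 0 R := Ring.krullDimLE_iff.mpr (Order.le_of_lt_succ hlt)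
  exact Ring.KrullDimLE.isField_of_isDomain

theorem ringKrullDim_eq_one_of_isIntegral_of_injective {R S : Type*} [CommRing R] [CommRing S]
    [IsDomain S] [Ring.DimensionLEOne S] (f : R →+* S) (hf : f.IsIntegral)
    (hinj : Function.Injective f) (hS : ¬IsField S) : ringKrullDim R = 1 := by
  let _ := f.toAlgebra
  have : Algebra.IsIntegral R S := ⟨hf⟩
  have := hinj.isDomain f
  have := Ring.DimensionLEOne.of_isIntegral_of_injective (R := R) (S := S) hinj
  exact Ring.DimensionLEOne.ringKrullDim_eq_one fun hR ↦ hS (isField_of_isIntegral_of_isField' hR)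

noncomputable def herzogHom (k : Type*) [Field k] (n : Fin 3 → ℕ) :
    MvPolynomial (Fin 3) k →+* k[X] :=
  (MvPolynomial.aeval fun i ↦ (X : k[X]) ^ n i).toRingHom

section Herzog

variable {k : Type*} [Field k] {n : Fin 3 → ℕ}

lemma herzogIdeal_eq_ker : herzogIdeal k n = RingHom.ker (herzogHom k n) := rfl

@[simp]
lemma herzogHom_X (i : Fin 3) : herzogHom k n (MvPolynomial.X i) = X ^ n i :=
  MvPolynomial.aeval_X _ _

@[simp]
lemma herzogHom_C (a : k) : herzogHom k n (MvPolynomial.C a) = C a :=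
  MvPolynomial.aeval_C _ _

instance herzogIdeal_isPrime : (herzogIdeal k n).IsPrime :=
  RingHom.ker_isPrime _

lemma X_pow_sub_X_pow_mem_herzogIdeal (i j : Fin 3) :
    (MvPolynomial.X i ^ n j - MvPolynomial.X j ^ n i : MvPolynomial (Fin 3) k) ∈
      herzogIdeal k n := by
  simp [herzogIdeal_eq_ker, ← pow_mul, mul_comm]

lemma herzogHom_isIntegral (h0 : 0 < n 0) : (herzogHom k n).IsIntegral :=
  Polynomial.isIntegral_of_isIntegralElem_X _ (fun a ↦ ⟨_, herzogHom_C a⟩)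
    ⟨X ^ n 0 - C (MvPolynomial.X 0), monic_X_pow_sub_C _ h0.ne', by simp⟩

lemma ringKrullDim_quotient_herzogIdeal (h0 : 0 < n 0) :
    ringKrullDim (MvPolynomial (Fin 3) k ⧸ herzogIdeal k n) = 1 :=
  ringKrullDim_eq_one_of_isIntegral_of_injective (RingHom.kerLift (herzogHom k n))
    ((herzogHom_isIntegral h0).tower_top (Ideal.Quotient.mk _) _)
    (RingHom.kerLift_injective _) (Polynomial.not_isField k)

lemma height_herzogIdeal (hpos : ∀ i, 0 < n i) : (herzogIdeal k n).height = 2 := by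
  have hnotmax : ¬(herzogIdeal k n).IsMaximal := fun h ↦ by
    let _ := Ideal.Quotient.field (herzogIdeal k n)
    have := ringKrullDim_quotient_herzogIdeal (k := k) (hpos 0)
    rw [ringKrullDim_eq_zero_of_field] at this
    exact zero_ne_one this
  have hle := Ideal.height_add_one_le_ringKrullDim_of_not_isMaximal hnotmax
  rw [MvPolynomial.ringKrullDim_of_isNoetherianRing, ringKrullDim_eq_zero_of_field, zero_add,
    Nat.card_eq_fintype_card, Fintype.card_fin] at hle
  have hge := Ideal.two_le_height_of_isRelPrime (X_pow_sub_X_pow_mem_herzogIdeal 1 2)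
    (X_pow_sub_X_pow_mem_herzogIdeal 0 1)
    (MvPolynomial.isRelPrime_X_pow_sub_X_pow k (hpos 2) (hpos 1))
  have h3 : (herzogIdeal k n).height + 1 ≤ 2 + 1 := WithBot.coe_le_coe.mp hle
  exact le_antisymm (WithTop.le_of_add_le_add_right WithTop.one_ne_top h3) hge

end Herzog

/-- The Herzog ideal `𝔭_n` is a prime ideal of height `2` in `k[x1,x2,x3]`, and
the quotient `A/𝔭_n` is a one-dimensional domain. -/
theorem stmt_13 {k : Type*} [Field k] (n : Fin 3 → ℕ) (hpos : ∀ i, 0 < n i) :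
    (herzogIdeal k n).IsPrime ∧
    idealHeight (herzogIdeal k n) = 2 ∧
    IsDomain (MvPolynomial (Fin 3) k ⧸ herzogIdeal k n) ∧
    ringKrullDim (MvPolynomial (Fin 3) k ⧸ herzogIdeal k n) = 1 := by
  refine ⟨inferInstance, ?_, Ideal.Quotient.isDomain _,
    ringKrullDim_quotient_herzogIdeal (hpos 0)⟩
  rw [idealHeight_eq_height, height_herzogIdeal hpos]
end

section
/- For the Herzog ideal 𝔭_n associated to n = (n1,n2,n3) with gcd(n1,n2,n3) = 1, the quotient A/(x1·A + 𝔭_n) is an Artinian ring of length n1. More generally, length(A/(x_i·A + 𝔭_n)) = n_i / gcd(n1,n2,n3) for each i. -/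
open MvPolynomial

/-- The length of a module: the Krull dimension of its lattice of submodules. -/
noncomputable def moduleLength (R M : Type*) [CommRing R] [AddCommGroup M]
    [Module R M] : WithBot ℕ∞ :=
  Order.krullDim (Submodule R M)

/-!
The monomial curve map `φ : k[x] → k[t]`, `xⱼ ↦ t^{nⱼ}`, has image `k[S]` for the semigroup `S`
generated by the `nⱼ`, and `xᵢ·A + ker φ` is the preimage of `t^{nᵢ}·k[S]`. Hence the quotient is
`k`-isomorphic to `k[S]/t^{nᵢ}k[S]`, which has a basis indexed by the Apéry set
`{s ∈ S | s - nᵢ ∉ S}`. Since `S` contains every large multiple of `d = gcd(n)`, the Apéry set meets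
each class of `dℤ` modulo `nᵢ` exactly once, so it has `nᵢ / d` elements. Finally every `xⱼ` is
nilpotent in the quotient (`xⱼ^{nᵢ} ≡ xᵢ^{nⱼ}`), so the quotient is a local `k`-algebra with residue
field `k`, and its length over `A` equals its dimension over `k`.
-/

open scoped Polynomial

-- `u + a ≠ s` rather than `s - a ∉ S`, which truncated subtraction would make false for `s < a`.
def aperySet (S : AddSubmonoid ℕ) (a : ℕ) : Set ℕ := {s | s ∈ S ∧ ∀ u ∈ S, u + a ≠ s}

namespace aperySet

variable {S : AddSubmonoid ℕ} {a : ℕ}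

theorem eq_of_modEq (ha : a ∈ S) {s t : ℕ} (hs : s ∈ aperySet S a) (ht : t ∈ aperySet S a)
    (h : s ≡ t [MOD a]) : s = t := by
  wlog hst : s ≤ t generalizing s t
  · exact (this ht hs h.symm (le_of_not_ge hst)).symm
  obtain ⟨l, hl⟩ := (Nat.modEq_iff_dvd' hst).mp h
  cases l with
  | zero => omega
  | succ l =>
    refine absurd ?_ (ht.2 (s + l • a) (add_mem hs.1 (AddSubmonoid.nsmul_mem S ha l)))
    rw [smul_eq_mul]
    linarith [Nat.sub_add_cancel hst]

theorem exists_modEq (ha : 0 < a) {m : ℕ} (hm : m ∈ S) :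
    ∃ s ∈ aperySet S a, s ≡ m [MOD a] := by
  classical
  have hex : ∃ t, t ∈ S ∧ t ≡ m [MOD a] := ⟨m, hm, rfl⟩
  refine ⟨Nat.find hex, ⟨(Nat.find_spec hex).1, fun u hu hua => ?_⟩, (Nat.find_spec hex).2⟩
  refine Nat.find_min hex (by omega : u < Nat.find hex) ⟨hu, ?_⟩
  have : u + a ≡ u [MOD a] := Nat.add_modEq_right
  exact this.symm.trans (hua ▸ (Nat.find_spec hex).2)

end aperySet

theorem ZMod.natCast_div_eq_natCast_div_iff {g a x y : ℕ} (hg : 0 < g) (ha : g ∣ a) (hx : g ∣ x)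
    (hy : g ∣ y) : ((x / g : ℕ) : ZMod (a / g)) = (y / g : ℕ) ↔ x ≡ y [MOD a] := by
  obtain ⟨a, rfl⟩ := ha
  obtain ⟨x, rfl⟩ := hx
  obtain ⟨y, rfl⟩ := hy
  simp only [Nat.mul_div_cancel_left _ hg, ZMod.natCast_eq_natCast_iff,
    Nat.ModEq.mul_left_cancel_iff' hg.ne']

theorem Nat.div_setGcd_pos {s : Set ℕ} {a : ℕ} (ha : a ∈ AddSubmonoid.closure s) (ha₀ : 0 < a) :
    0 < a / setGcd s :=
  have hga := setGcd_dvd_of_mem_closure ha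
  Nat.div_pos (Nat.le_of_dvd ha₀ hga) (Nat.pos_of_dvd_of_pos hga ha₀)

theorem Nat.card_aperySet_closure {s : Set ℕ} {a : ℕ} (ha : a ∈ AddSubmonoid.closure s)
    (ha₀ : 0 < a) : Nat.card (aperySet (AddSubmonoid.closure s) a) = a / setGcd s := by
  set g := setGcd s
  have hga : g ∣ a := setGcd_dvd_of_mem_closure ha
  have hg : 0 < g := Nat.pos_of_dvd_of_pos hga ha₀
  have : NeZero (a / g) := ⟨(div_setGcd_pos ha ha₀).ne'⟩
  let f : aperySet (AddSubmonoid.closure s) a → ZMod (a / g) := fun t => ((t / g : ℕ) : ZMod _)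
  have hf : Function.Bijective f := by
    refine ⟨fun t u htu => Subtype.ext ?_, fun r => ?_⟩
    · refine aperySet.eq_of_modEq ha t.2 u.2 ?_
      exact (ZMod.natCast_div_eq_natCast_div_iff hg hga (setGcd_dvd_of_mem_closure t.2.1)
        (setGcd_dvd_of_mem_closure u.2.1)).mp htu
    · obtain ⟨N, hN⟩ := exists_mem_closure_of_ge s
      set m := g * (r.val + a / g * N)
      have hm : m ∈ AddSubmonoid.closure s := by
        refine hN m ?_ (dvd_mul_right g _)
        exact (Nat.le_mul_of_pos_left N (NeZero.pos _)).trans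
          ((Nat.le_add_left _ _).trans (Nat.le_mul_of_pos_left _ hg))
      obtain ⟨t, ht, htm⟩ := aperySet.exists_modEq ha₀ hm
      refine ⟨⟨t, ht⟩, ?_⟩
      change ((t / g : ℕ) : ZMod (a / g)) = r
      rw [(ZMod.natCast_div_eq_natCast_div_iff hg hga (setGcd_dvd_of_mem_closure ht.1)
        (dvd_mul_right g _)).mpr htm]
      simp [Nat.mul_div_cancel_left _ hg]
  rw [Nat.card_eq_of_bijective f hf, Nat.card_zmod]

namespace Polynomial

variable {R : Type*} [Semiring R] {S : AddSubmonoid ℕ} {a : ℕ}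

theorem coeff_aperySet_eq_zero_iff {g : R[X]} (hg : ↑g.support ⊆ (S : Set ℕ)) :
    (∀ s ∈ aperySet S a, g.coeff s = 0) ↔
      ∃ h : R[X], ↑h.support ⊆ (S : Set ℕ) ∧ g = X ^ a * h := by
  constructor
  · intro hzero
    have hshift : ∀ s ∈ g.support, ∃ u ∈ S, u + a = s := by
      intro s hs
      by_contra! hne
      exact mem_support_iff.mp hs (hzero s ⟨hg hs, hne⟩)
    obtain ⟨h, rfl⟩ : X ^ a ∣ g := X_pow_dvd_iff.mpr fun s hs => by
      by_contra hne
      obtain ⟨u, -, hu⟩ := hshift s (mem_support_iff.mpr hne)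
      omega
    refine ⟨h, fun s hs => ?_, rfl⟩
    have hs' : s + a ∈ (X ^ a * h).support := by
      rw [mem_support_iff, coeff_X_pow_mul]
      exact mem_support_iff.mp hs
    obtain ⟨u, hu, hua⟩ := hshift _ hs'
    rwa [← Nat.add_right_cancel hua]
  · rintro ⟨h, hh, rfl⟩ s hs
    rw [coeff_X_pow_mul']
    split_ifs with has
    · by_contra hne
      exact hs.2 (s - a) (hh (mem_support_iff.mpr hne)) (Nat.sub_add_cancel has)
    · rfl

end Polynomial

noncomputable def aperyCoeff (R : Type*) [Semiring R] (S : AddSubmonoid ℕ) (a : ℕ) :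
    R[X] →ₗ[R] (aperySet S a → R) :=
  LinearMap.pi fun s => Polynomial.lcoeff R s

theorem aperyCoeff_eq_zero_iff {R : Type*} [Semiring R] {S : AddSubmonoid ℕ} {a : ℕ} {g : R[X]} :
    aperyCoeff R S a g = 0 ↔ ∀ s ∈ aperySet S a, g.coeff s = 0 := by
  simp [aperyCoeff, funext_iff]

theorem Ideal.mem_span_singleton_sup_ker_iff {R S F : Type*} [CommRing R] [CommRing S]
    [FunLike F R S] [RingHomClass F R S] (f : F) {x y : R} :
    x ∈ Ideal.span {y} ⊔ RingHom.ker f ↔ ∃ z, f x = f y * f z := by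
  rw [Ideal.mem_span_singleton_sup]
  constructor
  · rintro ⟨z, w, hw, rfl⟩
    exact ⟨z, by rw [map_add, RingHom.mem_ker.mp hw, add_zero, map_mul, mul_comm]⟩
  · rintro ⟨z, hz⟩
    exact ⟨z, x - z * y, by rw [RingHom.mem_ker, map_sub, map_mul, hz, mul_comm, sub_self],
      by ring⟩

noncomputable def monomialCurve (R : Type*) [CommSemiring R] {σ : Type*} (n : σ → ℕ) :
    MvPolynomial σ R →ₐ[R] R[X] :=
  aeval fun j => Polynomial.X ^ n j

section MonomialCurve

variable {R σ : Type*} [CommSemiring R] (n : σ → ℕ)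

theorem monomialCurve_X (j : σ) : monomialCurve R n (MvPolynomial.X j) = Polynomial.X ^ n j :=
  MvPolynomial.aeval_X _ _

theorem support_monomialCurve_subset (P : MvPolynomial σ R) :
    ↑(monomialCurve R n P).support ⊆ (AddSubmonoid.closure (Set.range n) : Set ℕ) := by
  induction P using MvPolynomial.induction_on with
  | C c =>
    rw [monomialCurve, MvPolynomial.aeval_C, Polynomial.algebraMap_eq]
    exact (Finset.coe_subset.mpr (Polynomial.support_C_subset c)).trans (by simp)
  | add P Q hP hQ =>
    rw [map_add]
    exact (Finset.coe_subset.mpr Polynomial.support_add).trans (by simpa using ⟨hP, hQ⟩)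
  | mul_X P j hP =>
    intro s hs
    rw [map_mul, monomialCurve_X, Finset.mem_coe, Polynomial.mem_support_iff,
      Polynomial.coeff_mul_X_pow'] at hs
    split_ifs at hs with hjs
    · rw [← Nat.sub_add_cancel hjs]
      exact add_mem (hP (Polynomial.mem_support_iff.mpr hs))
        (AddSubmonoid.subset_closure (Set.mem_range_self j))
    · exact absurd rfl hs

theorem X_pow_mem_range_monomialCurve {s : ℕ} (hs : s ∈ AddSubmonoid.closure (Set.range n)) :
    (Polynomial.X ^ s : R[X]) ∈ (monomialCurve R n).range := by
  induction hs using AddSubmonoid.closure_induction with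
  | mem s hs =>
    obtain ⟨j, rfl⟩ := hs
    exact ⟨MvPolynomial.X j, monomialCurve_X n j⟩
  | zero => rw [pow_zero]; exact one_mem _
  | add s t _ _ hs ht => rw [pow_add]; exact mul_mem hs ht

theorem mem_range_monomialCurve_iff {g : R[X]} :
    g ∈ (monomialCurve R n).range ↔
      ↑g.support ⊆ (AddSubmonoid.closure (Set.range n) : Set ℕ) := by
  refine ⟨fun ⟨P, hP⟩ => hP ▸ support_monomialCurve_subset n P, fun hg => ?_⟩
  rw [g.as_sum_support_C_mul_X_pow]
  refine sum_mem fun s hs => mul_mem ?_ (X_pow_mem_range_monomialCurve n (hg hs))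
  rw [← Polynomial.algebraMap_eq]
  exact Subalgebra.algebraMap_mem _ _

end MonomialCurve

section QuotientDimension

variable {k σ : Type*} [Field k] (n : σ → ℕ)

theorem ker_aperyCoeff_comp_monomialCurve (i : σ) :
    LinearMap.ker ((aperyCoeff k (AddSubmonoid.closure (Set.range n)) (n i)).comp
        (monomialCurve k n).toLinearMap) =
      (Ideal.span {X i} ⊔ RingHom.ker (monomialCurve k n)).restrictScalars k := by
  ext P
  rw [LinearMap.mem_ker, Submodule.restrictScalars_mem, Ideal.mem_span_singleton_sup_ker_iff,
    monomialCurve_X, LinearMap.comp_apply, AlgHom.toLinearMap_apply, aperyCoeff_eq_zero_iff,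
    Polynomial.coeff_aperySet_eq_zero_iff (support_monomialCurve_subset n P)]
  constructor
  · rintro ⟨h, hh, hP⟩
    obtain ⟨Q, rfl⟩ := (mem_range_monomialCurve_iff n).mpr hh
    exact ⟨Q, hP⟩
  · rintro ⟨Q, hQ⟩
    exact ⟨_, support_monomialCurve_subset n Q, hQ⟩

theorem surjective_aperyCoeff_comp_monomialCurve (a : ℕ)
    [Finite (aperySet (AddSubmonoid.closure (Set.range n)) a)] :
    Function.Surjective ((aperyCoeff k (AddSubmonoid.closure (Set.range n)) a).comp
      (monomialCurve k n).toLinearMap) := by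
  rw [← LinearMap.range_eq_top, eq_top_iff, ← (Pi.basisFun k _).span_eq, Submodule.span_le]
  rintro _ ⟨s, rfl⟩
  obtain ⟨P, hP⟩ := X_pow_mem_range_monomialCurve (R := k) n s.2.1
  change monomialCurve k n P = _ at hP
  refine ⟨P, funext fun t => ?_⟩
  simp [aperyCoeff, hP, Polynomial.coeff_X_pow, Pi.single_apply, Subtype.ext_iff]

theorem finrank_quotient_span_X_sup_ker_monomialCurve {i : σ} (hi : 0 < n i) :
    Module.finrank k (MvPolynomial σ k ⧸ (Ideal.span {X i} ⊔ RingHom.ker (monomialCurve k n))) =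
      n i / Nat.setGcd (Set.range n) := by
  have hi' : n i ∈ AddSubmonoid.closure (Set.range n) :=
    AddSubmonoid.subset_closure (Set.mem_range_self i)
  have hcard := Nat.card_aperySet_closure hi' hi
  have : Finite (aperySet (AddSubmonoid.closure (Set.range n)) (n i)) :=
    Nat.finite_of_card_ne_zero (hcard ▸ (Nat.div_setGcd_pos hi' hi).ne')
  have := Fintype.ofFinite (aperySet (AddSubmonoid.closure (Set.range n)) (n i))
  let e := (Submodule.Quotient.restrictScalarsEquiv k _).symm ≪≫ₗ
    Submodule.quotEquivOfEq _ _ (ker_aperyCoeff_comp_monomialCurve n i).symm ≪≫ₗ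
    LinearMap.quotKerEquivOfSurjective _ (surjective_aperyCoeff_comp_monomialCurve n (n i))
  rw [e.finrank_eq, Module.finrank_fintype_fun_eq_card, ← Nat.card_eq_fintype_card, hcard]

end QuotientDimension

theorem Module.length_eq_length_of_ker_le_nilradical {k B M : Type*} [Field k] [CommRing B]
    [Algebra k B] [AddCommGroup M] [Module k M] [Module B M] [IsScalarTower k B M]
    (ε : B →ₐ[k] k) (hε : RingHom.ker ε ≤ nilradical B) :
    Module.length k M = Module.length B M := by
  have hmax : (RingHom.ker ε).IsMaximal :=
    RingHom.ker_isMaximal_of_surjective ε fun c => ⟨algebraMap k B c, ε.commutes c⟩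
  have : (nilradical B).IsMaximal := le_antisymm (nilradical_le_prime _) hε ▸ hmax
  have : IsLocalRing B := .of_isMaximal_nilradical B
  have hsurj : Function.Surjective
      (algebraMap (IsLocalRing.ResidueField k) (IsLocalRing.ResidueField B)) := by
    intro y
    obtain ⟨b, rfl⟩ := IsLocalRing.residue_surjective y
    refine ⟨IsLocalRing.residue k (ε b), ?_⟩
    rw [IsLocalRing.ResidueField.algebraMap_residue, ← sub_eq_zero, ← map_sub,
      IsLocalRing.residue_eq_zero_iff, ← IsLocalRing.eq_maximalIdeal hmax, RingHom.mem_ker,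
      map_sub, AlgHom.commutes, Algebra.algebraMap_self, RingHom.id_apply, sub_self]
  rw [IsLocalRing.length_restrictScalars k B M, Module.length_eq_of_surjective hsurj,
    Module.length_eq_finrank, Module.finrank_self, Nat.cast_one, mul_one]

section QuotientLength

variable {k σ : Type*} [Field k] {n : σ → ℕ}

theorem X_pow_mem_span_X_sup_ker_monomialCurve (i : σ) {j : σ} (hj : 0 < n j) :
    (X j : MvPolynomial σ k) ^ n i ∈ Ideal.span {X i} ⊔ RingHom.ker (monomialCurve k n) := by
  refine (Ideal.mem_span_singleton_sup_ker_iff _).mpr ⟨X i ^ (n j - 1), ?_⟩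
  simp only [map_pow, monomialCurve_X, ← pow_mul, ← pow_add]
  congr 1
  obtain ⟨m, hm⟩ : ∃ m, n j = m + 1 := ⟨n j - 1, by omega⟩
  rw [hm, Nat.add_sub_cancel]
  ring

theorem span_X_sup_ker_monomialCurve_le_ker_aeval_zero (hpos : ∀ j, 0 < n j) (i : σ) :
    Ideal.span {X i} ⊔ RingHom.ker (monomialCurve k n) ≤ RingHom.ker (aeval (0 : σ → k)) := by
  have hcomp : (Polynomial.aeval (0 : k)).comp (monomialCurve k n) = aeval 0 := by
    rw [monomialCurve, comp_aeval]
    congr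
    funext j
    simp [zero_pow (hpos j).ne']
  refine sup_le (Ideal.span_le.mpr (by simp)) fun P hP => ?_
  rw [RingHom.mem_ker, ← hcomp, AlgHom.comp_apply, RingHom.mem_ker.mp hP, map_zero]

theorem ker_quotient_aeval_zero_le_nilradical (hpos : ∀ j, 0 < n j) (i : σ) :
    RingHom.ker (Ideal.Quotient.liftₐ _ (aeval (0 : σ → k))
      (span_X_sup_ker_monomialCurve_le_ker_aeval_zero hpos i)) ≤
      nilradical (MvPolynomial σ k ⧸ (Ideal.span {X i} ⊔ RingHom.ker (monomialCurve k n))) := by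
  set I := Ideal.span {X i} ⊔ RingHom.ker (monomialCurve k n)
  have key (P : MvPolynomial σ k) :
      Ideal.Quotient.mk I P - algebraMap k _ (aeval 0 P) ∈ nilradical _ := by
    induction P using MvPolynomial.induction_on with
    | C c =>
      rw [← MvPolynomial.algebraMap_eq, Ideal.Quotient.mk_algebraMap, AlgHom.commutes,
        Algebra.algebraMap_self, RingHom.id_apply, sub_self]
      exact zero_mem _
    | add P Q hP hQ =>
      convert add_mem hP hQ using 1
      simp only [map_add]
      ring
    | mul_X P j hP =>
      simp only [map_mul, aeval_X, Pi.zero_apply, mul_zero, map_zero, sub_zero]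
      refine Ideal.mul_mem_left _ _ (mem_nilradical.mpr ⟨n i, ?_⟩)
      rw [← map_pow, Ideal.Quotient.eq_zero_iff_mem]
      exact X_pow_mem_span_X_sup_ker_monomialCurve i (hpos j)
  intro b hb
  obtain ⟨P, rfl⟩ := Ideal.Quotient.mk_surjective b
  have hP : aeval (0 : σ → k) P = 0 := hb
  simpa only [hP, map_zero, sub_zero] using key P

theorem finite_quotient_span_X_sup_ker_monomialCurve {i : σ} (hi : 0 < n i) :
    Module.Finite k (MvPolynomial σ k ⧸ (Ideal.span {X i} ⊔ RingHom.ker (monomialCurve k n))) :=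
  Module.finite_of_finrank_pos <| (finrank_quotient_span_X_sup_ker_monomialCurve (k := k) n hi) ▸
    Nat.div_setGcd_pos (AddSubmonoid.subset_closure (Set.mem_range_self i)) hi

theorem isArtinianRing_quotient_span_X_sup_ker_monomialCurve {i : σ} (hi : 0 < n i) :
    IsArtinianRing (MvPolynomial σ k ⧸ (Ideal.span {X i} ⊔ RingHom.ker (monomialCurve k n))) :=
  have := finite_quotient_span_X_sup_ker_monomialCurve (k := k) hi
  .of_finite k _

theorem length_quotient_span_X_sup_ker_monomialCurve (hpos : ∀ j, 0 < n j) (i : σ) :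
    Module.length (MvPolynomial σ k)
        (MvPolynomial σ k ⧸ (Ideal.span {X i} ⊔ RingHom.ker (monomialCurve k n))) =
      n i / Nat.setGcd (Set.range n) := by
  have := finite_quotient_span_X_sup_ker_monomialCurve (k := k) (hpos i)
  have hmk : Function.Surjective (algebraMap (MvPolynomial σ k)
      (MvPolynomial σ k ⧸ (Ideal.span {X i} ⊔ RingHom.ker (monomialCurve k n)))) :=
    Ideal.Quotient.mk_surjective
  rw [Module.length_eq_of_surjective hmk,
    ← Module.length_eq_length_of_ker_le_nilradical _ (ker_quotient_aeval_zero_le_nilradical hpos i),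
    Module.length_eq_finrank, finrank_quotient_span_X_sup_ker_monomialCurve n (hpos i)]

end QuotientLength

theorem Nat.setGcd_range_fin_three (n : Fin 3 → ℕ) :
    Nat.setGcd (Set.range n) = Nat.gcd (n 0) (Nat.gcd (n 1) (n 2)) := by
  refine Nat.dvd_antisymm (Nat.dvd_gcd ?_ (Nat.dvd_gcd ?_ ?_)) (Nat.dvd_setGcd_iff.mpr ?_)
  · exact Nat.setGcd_dvd_of_mem (Set.mem_range_self 0)
  · exact Nat.setGcd_dvd_of_mem (Set.mem_range_self 1)
  · exact Nat.setGcd_dvd_of_mem (Set.mem_range_self 2)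
  · rintro _ ⟨j, rfl⟩
    fin_cases j
    · exact Nat.gcd_dvd_left _ _
    · exact (Nat.gcd_dvd_right _ _).trans (Nat.gcd_dvd_left _ _)
    · exact (Nat.gcd_dvd_right _ _).trans (Nat.gcd_dvd_right _ _)

/-- The quotient `A/(xᵢ·A + 𝔭_n)` is an Artinian ring of length
`nᵢ / gcd(n1,n2,n3)`; in particular, when `gcd(n1,n2,n3) = 1`, the length of
`A/(x1·A + 𝔭_n)` is `n1`. -/
theorem stmt_14 {k : Type*} [Field k] (n : Fin 3 → ℕ) (hpos : ∀ i, 0 < n i)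
    (d : ℕ) (hd : d = Nat.gcd (n 0) (Nat.gcd (n 1) (n 2))) :
    ∀ i : Fin 3,
      IsArtinianRing (MvPolynomial (Fin 3) k ⧸
        (Ideal.span {(X i : MvPolynomial (Fin 3) k)} ⊔ herzogIdeal k n)) ∧
      moduleLength (MvPolynomial (Fin 3) k)
        (MvPolynomial (Fin 3) k ⧸
          (Ideal.span {(X i : MvPolynomial (Fin 3) k)} ⊔ herzogIdeal k n)) =
        ((n i / d : ℕ) : WithBot ℕ∞) := by
  intro i
  have hherzog : herzogIdeal k n = RingHom.ker (monomialCurve k n) := rfl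
  rw [hherzog, moduleLength, ← Module.coe_length, length_quotient_span_X_sup_ker_monomialCurve hpos,
    Nat.setGcd_range_fin_three, hd]
  exact ⟨isArtinianRing_quotient_span_X_sup_ker_monomialCurve (hpos i), rfl⟩
end

section
/- Two Herzog ideals 𝔭_m and 𝔭_n (m, n ∈ ℕ^3) are equal if and only if m and n are linearly dependent over ℚ. -/
open Polynomial

lemma aux_mem {k : Type*} [Field k] (n : Fin 3 → ℕ) (p : MvPolynomial (Fin 3) k) :
    p ∈ herzogIdeal k n ↔ MvPolynomial.aeval (fun i => (X : k[X]) ^ n i) p = 0 :=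
  Iff.rfl

lemma aux_inj {k : Type*} [Field k] (b : ℕ) (hb : 0 < b) :
    Function.Injective (Polynomial.aeval (R := k) ((X : k[X]) ^ b)) := by
  intro p q h
  have h0 : (p - q).comp (X ^ b) = 0 := by
    rw [comp_eq_aeval, map_sub, h, sub_self]
  rcases (comp_eq_zero_iff).mp h0 with h1 | ⟨_, h2⟩
  · exact sub_eq_zero.mp h1
  · exfalso
    have : ((X : k[X]) ^ b).coeff 0 = 0 := by
      simp [coeff_X_pow]
      omega
    rw [this, map_zero] at h2
    exact pow_ne_zero b X_ne_zero h2

lemma aux_scale {k : Type*} [Field k] (n : Fin 3 → ℕ) (b : ℕ) (hb : 0 < b) :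
    herzogIdeal k n = herzogIdeal k (fun i => b * n i) := by
  ext p
  rw [aux_mem, aux_mem]
  have key : Polynomial.aeval (R := k) ((X : k[X]) ^ b) (MvPolynomial.aeval (fun i => (X : k[X]) ^ n i) p)
      = MvPolynomial.aeval (fun i => (X : k[X]) ^ (b * n i)) p := by
    rw [MvPolynomial.comp_aeval_apply]
    have hfn : (fun i => Polynomial.aeval (R := k) ((X : k[X]) ^ b) ((X : k[X]) ^ n i))
        = fun i => (X : k[X]) ^ (b * n i) := by
      funext i
      rw [Polynomial.aeval_X_pow, ← pow_mul, mul_comm]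
    rw [hfn]
  constructor
  · intro h; rw [← key, h, map_zero]
  · intro h
    rw [← key] at h
    exact aux_inj b hb (by rw [h, map_zero])

/-- Two Herzog ideals `𝔭_m` and `𝔭_n` are equal iff `m` and `n` are linearly
dependent over `ℚ`. -/
theorem stmt_15 {k : Type*} [Field k] (m n : Fin 3 → ℕ)
    (hm : ∀ i, 0 < m i) (hn : ∀ i, 0 < n i) :
    herzogIdeal k m = herzogIdeal k n ↔
      ∃ q : ℚ, q ≠ 0 ∧ ∀ i, (m i : ℚ) = q * (n i : ℚ) := by
  constructor
  · intro h
    have hm0 : ((m 0 : ℚ)) ≠ 0 := by exact_mod_cast (hm 0).ne'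
    have hn0 : ((n 0 : ℚ)) ≠ 0 := by exact_mod_cast (hn 0).ne'
    refine ⟨(m 0 : ℚ) / (n 0 : ℚ), div_ne_zero hm0 hn0, fun i => ?_⟩
    -- key: n 0 * m i = n i * m 0
    have hmem : (MvPolynomial.X 0 ^ m i - MvPolynomial.X i ^ m 0 : MvPolynomial (Fin 3) k)
        ∈ herzogIdeal k m := by
      rw [aux_mem]
      simp [← pow_mul, mul_comm]
    rw [h, aux_mem] at hmem
    simp only [map_sub, map_pow, MvPolynomial.aeval_X, ← pow_mul, sub_eq_zero] at hmem
    have := congrArg natDegree hmem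
    rw [natDegree_X_pow, natDegree_X_pow] at this
    -- this : n 0 * m i = n i * m 0
    rw [div_mul_eq_mul_div, eq_div_iff hn0]
    have h2 : m i * n 0 = m 0 * n i := by rw [mul_comm, this, mul_comm]
    exact_mod_cast h2
  · rintro ⟨q, hq, hqi⟩
    have hq0 : 0 < q := by
      have := hqi 0
      have hm0 : (0:ℚ) < m 0 := by exact_mod_cast hm 0
      have hn0 : (0:ℚ) < n 0 := by exact_mod_cast hn 0
      nlinarith [this]
    -- b * m i = a * n i with a = q.num.toNat, b = q.den
    have key : ∀ i, q.den * m i = q.num.toNat * n i := by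
      intro i
      have hnum : (0:ℤ) < q.num := Rat.num_pos.mpr hq0
      have : ((q.den * m i : ℕ) : ℚ) = ((q.num.toNat * n i : ℕ) : ℚ) := by
        have hcast : ((q.num.toNat : ℚ)) = (q.num : ℚ) := by
          exact_mod_cast Int.toNat_of_nonneg hnum.le
        have hd : ((q.den : ℚ)) ≠ 0 := by exact_mod_cast q.den_nz
        have hqd : ((q.num : ℚ)) = q * q.den := (div_eq_iff hd).mp (Rat.num_div_den q)
        push_cast
        rw [hcast, hqi i, hqd]
        ring
      exact_mod_cast this
    have hb : 0 < q.den := q.pos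
    have ha : 0 < q.num.toNat := by
      have := Rat.num_pos.mpr hq0; omega
    calc herzogIdeal k m = herzogIdeal k (fun i => q.den * m i) := aux_scale m q.den hb
      _ = herzogIdeal k (fun i => q.num.toNat * n i) := by
          congr 1; funext i; exact key i
      _ = herzogIdeal k n := (aux_scale n q.num.toNat ha).symm
end

section
/- The binomial x2^{m3} − x3^{m2} belongs to the Herzog–Northcott ideal I, where m2 = c1·c3 − a3·b1 = a1·c3 + b1·b3 and m3 = c1·c2 − a1·b2 = a1·a2 + b1·c2. -/
/-- The binomial `x2^{m3} − x3^{m2}` belongs to the Herzog–Northcott ideal `I`,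
where `m2 = c1·c3 − a3·b1 = a1·c3 + b1·b3` and `m3 = c1·c2 − a1·b2 = a1·a2 + b1·c2`. -/
theorem stmt_18 {A : Type*} [CommRing A] (x1 x2 x3 : A)
    (a1 a2 a3 b1 b2 b3 c1 c2 c3 : ℕ)
    (ha1 : 0 < a1) (ha2 : 0 < a2) (ha3 : 0 < a3)
    (hb1 : 0 < b1) (hb2 : 0 < b2) (hb3 : 0 < b3)
    (hc1 : c1 = a1 + b1) (hc2 : c2 = a2 + b2) (hc3 : c3 = a3 + b3)
    (I : Ideal A)
    (hI : I = Ideal.span {x1 ^ c1 - x2 ^ b2 * x3 ^ a3,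
      x2 ^ c2 - x1 ^ a1 * x3 ^ b3, x3 ^ c3 - x1 ^ b1 * x2 ^ a2})
    (m2 m3 : ℕ) (hm2 : m2 = c1 * c3 - a3 * b1) (hm3 : m3 = c1 * c2 - a1 * b2) :
    m2 = a1 * c3 + b1 * b3 ∧ m3 = a1 * a2 + b1 * c2 ∧
    x2 ^ m3 - x3 ^ m2 ∈ I := by
  subst hc1 hc2 hc3 hI
  have hm2' : m2 = a1 * (a3 + b3) + b1 * b3 := by
    have h : (a1 + b1) * (a3 + b3) = a1 * (a3 + b3) + b1 * b3 + a3 * b1 := by ring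
    rw [hm2, h, Nat.add_sub_cancel]
  have hm3' : m3 = a1 * a2 + b1 * (a2 + b2) := by
    have h : (a1 + b1) * (a2 + b2) = a1 * a2 + b1 * (a2 + b2) + a1 * b2 := by ring
    rw [hm3, h, Nat.add_sub_cancel]
  refine ⟨hm2', hm3', ?_⟩
  subst hm2' hm3'
  obtain ⟨d, hd⟩ := sub_dvd_pow_sub_pow (x2 ^ (a2 + b2)) (x1 ^ a1 * x3 ^ b3) b1
  obtain ⟨e, he⟩ := sub_dvd_pow_sub_pow (x3 ^ (a3 + b3)) (x1 ^ b1 * x2 ^ a2) a1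
  have key : x2 ^ (a1 * a2 + b1 * (a2 + b2)) - x3 ^ (a1 * (a3 + b3) + b1 * b3) =
      ((x2 ^ (a2 + b2) - x1 ^ a1 * x3 ^ b3) * d) * x2 ^ (a1 * a2) -
      ((x3 ^ (a3 + b3) - x1 ^ b1 * x2 ^ a2) * e) * x3 ^ (b1 * b3) := by
    rw [← hd, ← he]
    rw [← pow_mul, ← pow_mul, mul_pow, mul_pow, ← pow_mul, ← pow_mul, ← pow_mul, ← pow_mul]
    ring_nf
  rw [key]
  apply Ideal.sub_mem
  · exact Ideal.mul_mem_right _ _ (Ideal.mul_mem_right _ _ (Ideal.subset_span (by simp)))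
  · exact Ideal.mul_mem_right _ _ (Ideal.mul_mem_right _ _ (Ideal.subset_span (by simp)))
end

section
/- Consider the HN ideal I = (x1^5 − x2^2·x3, x2^4 − x1·x3^3, x3^4 − x1^4·x2^2) in k[x1,x2,x3] with char(k) = 2, and let 𝔭 = (x1^5 − x2^2·x3, x2^3 − x1^3·x3, x3^2 − x1^2·x2). Then 𝔭^2 ⊆ I ⊊ 𝔭; in particular (x2^3 − x1^3·x3)^2 = −x1·x3^2·(x1^5 − x2^2·x3) + x2^2·(x2^4 − x1·x3^3) and (x3^2 − x1^2·x2)^2 = x3^4 − x1^4·x2^2 (in characteristic 2). -/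
open MvPolynomial

/-- For the HN ideal `I = (x1^5 − x2^2·x3, x2^4 − x1·x3^3, x3^4 − x1^4·x2^2)` in
`k[x1,x2,x3]` with `char k = 2`, and `𝔭 = (x1^5 − x2^2·x3, x2^3 − x1^3·x3,
x3^2 − x1^2·x2)`, one has `𝔭^2 ⊆ I ⊊ 𝔭`; in particular
`(x2^3 − x1^3·x3)^2 = −x1·x3^2·(x1^5 − x2^2·x3) + x2^2·(x2^4 − x1·x3^3)` and
`(x3^2 − x1^2·x2)^2 = x3^4 − x1^4·x2^2` in characteristic `2`. -/
theorem stmt_19 {k : Type*} [Field k] [CharP k 2]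
    (x1 x2 x3 : MvPolynomial (Fin 3) k)
    (h1 : x1 = X 0) (h2 : x2 = X 1) (h3 : x3 = X 2)
    (I p : Ideal (MvPolynomial (Fin 3) k))
    (hI : I = Ideal.span {x1 ^ 5 - x2 ^ 2 * x3, x2 ^ 4 - x1 * x3 ^ 3,
      x3 ^ 4 - x1 ^ 4 * x2 ^ 2})
    (hp : p = Ideal.span {x1 ^ 5 - x2 ^ 2 * x3, x2 ^ 3 - x1 ^ 3 * x3,
      x3 ^ 2 - x1 ^ 2 * x2}) :
    p ^ 2 ≤ I ∧ I < p ∧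
    (x2 ^ 3 - x1 ^ 3 * x3) ^ 2 =
      -(x1 * x3 ^ 2) * (x1 ^ 5 - x2 ^ 2 * x3) + x2 ^ 2 * (x2 ^ 4 - x1 * x3 ^ 3) ∧
    (x3 ^ 2 - x1 ^ 2 * x2) ^ 2 = x3 ^ 4 - x1 ^ 4 * x2 ^ 2 := by
  have htwo : (2 : MvPolynomial (Fin 3) k) = 0 := by
    have : ((2 : ℕ) : MvPolynomial (Fin 3) k) = 0 := CharP.cast_eq_zero _ 2
    exact_mod_cast this
  set a := x1 ^ 5 - x2 ^ 2 * x3 with ha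
  set b := x2 ^ 3 - x1 ^ 3 * x3 with hb
  set c := x3 ^ 2 - x1 ^ 2 * x2 with hc
  set B := x2 ^ 4 - x1 * x3 ^ 3 with hBdef
  set C := x3 ^ 4 - x1 ^ 4 * x2 ^ 2 with hCdef
  have hA : a ∈ I := hI ▸ Ideal.subset_span (by left; rfl)
  have hB : B ∈ I := hI ▸ Ideal.subset_span (by right; left; rfl)
  have hC : C ∈ I := hI ▸ Ideal.subset_span (by right; right; rfl)
  have id1 : b ^ 2 = -(x1 * x3 ^ 2) * a + x2 ^ 2 * B := by
    rw [hb, ha, hBdef]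
    linear_combination (x1 ^ 6 * x3 ^ 2 - x1 ^ 3 * x2 ^ 3 * x3) * htwo
  have id2 : c ^ 2 = C := by
    rw [hc, hCdef]
    linear_combination (x1 ^ 4 * x2 ^ 2 - x1 ^ 2 * x2 * x3 ^ 2) * htwo
  have idbc : b * c = x2 * x3 * a - x1 ^ 2 * B := by
    rw [hb, hc, ha, hBdef]
    linear_combination (x2 ^ 3 * x3 ^ 2 - x1 ^ 3 * x3 ^ 3) * htwo
  have idB : B = x2 * b - x1 * x3 * c := by rw [hb, hc, hBdef]; ring
  -- membership of all pairwise products in I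
  have hbb : b * b ∈ I := by
    have : b * b = -(x1 * x3 ^ 2) * a + x2 ^ 2 * B := by rw [← pow_two]; exact id1
    rw [this]; exact Ideal.add_mem _ (I.mul_mem_left _ hA) (I.mul_mem_left _ hB)
  have hbc : b * c ∈ I := by
    rw [idbc]; exact Ideal.sub_mem _ (I.mul_mem_left _ hA) (I.mul_mem_left _ hB)
  have hcc : c * c ∈ I := by
    have : c * c = C := by rw [← pow_two]; exact id2
    rw [this]; exact hC
  have key : ∀ x ∈ ({a, b, c} : Set (MvPolynomial (Fin 3) k)),
      ∀ y ∈ ({a, b, c} : Set (MvPolynomial (Fin 3) k)), x * y ∈ I := by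
    rintro x (rfl | rfl | rfl) y (rfl | rfl | rfl)
    · exact I.mul_mem_right _ hA
    · exact I.mul_mem_right _ hA
    · exact I.mul_mem_right _ hA
    · exact I.mul_mem_left _ hA
    · exact hbb
    · exact hbc
    · exact I.mul_mem_left _ hA
    · rw [mul_comm]; exact hbc
    · exact hcc
  have hsq : p ^ 2 ≤ I := by
    rw [hp, pow_two, Ideal.span_mul_span']
    rw [Ideal.span_le]
    rintro z hz
    rw [Set.mem_mul] at hz
    obtain ⟨x, hx, y, hy, rfl⟩ := hz
    exact key x hx y hy
  have hcp : c ∈ p := hp ▸ Ideal.subset_span (by right; right; rfl)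
  have hIp : I ≤ p := by
    rw [hI, Ideal.span_le]
    rintro z (rfl | rfl | rfl)
    · exact hp ▸ Ideal.subset_span (by left; rfl)
    · rw [idB]
      exact Ideal.sub_mem _ (p.mul_mem_left _ (hp ▸ Ideal.subset_span (by right; left; rfl)))
        (p.mul_mem_left _ hcp)
    · rw [← id2, pow_two]; exact p.mul_mem_left _ hcp
  -- strictness: c ∉ I via the map to k[X]/(X^3)
  have hcI : c ∉ I := by
    intro hcmem
    let R := Polynomial k ⧸ Ideal.span {(Polynomial.X : Polynomial k) ^ 3}
    let t : R := Ideal.Quotient.mk _ Polynomial.X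
    let φ : MvPolynomial (Fin 3) k →ₐ[k] R :=
      MvPolynomial.aeval (fun i => if i = 2 then t else 0)
    have hφ0 : φ (X 0) = 0 := by simp [φ, aeval_X]
    have hφ1 : φ (X 1) = 0 := by simp [φ, aeval_X]
    have hφ2 : φ (X 2) = t := by simp [φ, aeval_X]
    have ht3 : t ^ 3 = 0 := by
      rw [show t ^ 3 = Ideal.Quotient.mk _ ((Polynomial.X : Polynomial k) ^ 3) from rfl]
      rw [Ideal.Quotient.eq_zero_iff_mem]
      exact Ideal.subset_span rfl
    have ht4 : t ^ 4 = 0 := by rw [show t ^ 4 = t ^ 3 * t by ring, ht3, zero_mul]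
    have ea : φ a = 0 := by
      rw [ha, h1, h2, h3, map_sub, map_mul, map_pow, map_pow, hφ0, hφ1, hφ2]
      ring
    have eb : φ B = 0 := by
      rw [hBdef, h1, h2, h3, map_sub, map_mul, map_pow, map_pow, hφ0, hφ1, hφ2]
      ring
    have ec : φ C = 0 := by
      rw [hCdef, h1, h2, h3, map_sub, map_mul, map_pow, map_pow, map_pow, hφ0, hφ1, hφ2, ht4]
      ring
    have hkills : I ≤ RingHom.ker φ.toRingHom := by
      rw [hI, Ideal.span_le]
      rintro z (rfl | rfl | rfl)
      · exact ea
      · exact eb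
      · exact ec
    have hφc : φ c = 0 := hkills hcmem
    rw [hc, h1, h2, h3] at hφc
    simp only [map_sub, map_mul, map_pow, hφ0, hφ1, hφ2] at hφc
    have ht2 : t ^ 2 = 0 := by
      rw [show t ^ 2 - 0 ^ 2 * 0 = t ^ 2 by ring] at hφc
      exact hφc
    have : (Polynomial.X : Polynomial k) ^ 2 ∈
        Ideal.span {(Polynomial.X : Polynomial k) ^ 3} := by
      rw [← Ideal.Quotient.eq_zero_iff_mem]
      exact ht2
    rw [Ideal.mem_span_singleton, Polynomial.X_pow_dvd_iff] at this
    have h2' := this 2 (by norm_num)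
    rw [Polynomial.coeff_X_pow] at h2'
    simp at h2' 
  refine ⟨hsq, lt_of_le_of_ne hIp ?_, ?_, ?_⟩
  · intro h; exact hcI (h ▸ hcp)
  · exact id1
  · exact id2
end
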